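/- arXiv:2604.27515 — 5 statements merged into one kernel-verified Lean document; each statement's English description precedes it below -/
import Mathlib

section
/- Let κ be an (X,ρ)-kernel on a finite graded poset X. Then for every s < t in X, the polynomial κ_{st}(x) is divisible by x − 1 in ℤ[x]. -/
open Polynomial

variable {α : Type*} [Fintype α] [PartialOrder α] [DecidableEq α]
  [DecidableRel ((· ≤ ·) : α → α → Prop)]

/-- Convolution product in the incidence algebra over ℤ[x] of a finite poset. -/
noncomputable def iconv (a b : α → α → Polynomial ℤ) : α → α → Polynomial ℤ :=
  fun s t => ∑ w ∈ Finset.univ.filter (fun w => s ≤ w ∧ w ≤ t), a s w * b w t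

/-- The identity element δ of the incidence algebra. -/
noncomputable def idelta : α → α → Polynomial ℤ :=
  fun s t => if s = t then 1 else 0

/-- The reversal involution `(a^rev)_{st}(x) = x^{ρ(t)-ρ(s)} a_{st}(1/x)`. -/
noncomputable def irev (ρ : α → ℤ) (a : α → α → Polynomial ℤ) : α → α → Polynomial ℤ :=
  fun s t => (a s t).reflect (ρ t - ρ s).toNat

lemma eval_one_reflect (N : ℕ) (f : Polynomial ℤ) (hf : f.natDegree ≤ N) :
    (f.reflect N).eval 1 = f.eval 1 := by
  letI : Invertible (1 : ℤ) := invertibleOne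
  have h := Polynomial.eval₂_reflect_mul_pow (RingHom.id ℤ) (1 : ℤ) N f hf
  simpa [Polynomial.eval₂_eq_eval_map] using h

/-- If κ is an (X,ρ)-kernel (κ_{ss} = 1 and κ⁻¹ = κ^rev), then for
every s < t the polynomial κ_{st}(x) is divisible by x − 1 in ℤ[x]. -/
theorem stmt4 (ρ : α → ℤ) (hρ : ∀ s t : α, s ≤ t → ρ s ≤ ρ t)
    (κ : α → α → Polynomial ℤ)
    (hdeg : ∀ s t : α, s ≤ t → ((κ s t).natDegree : ℤ) ≤ ρ t - ρ s)
    (hdiag : ∀ s : α, κ s s = 1)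
    (hker₁ : ∀ s t : α, s ≤ t → iconv κ (irev ρ κ) s t = idelta s t)
    (hker₂ : ∀ s t : α, s ≤ t → iconv (irev ρ κ) κ s t = idelta s t) :
    ∀ s t : α, s < t → (Polynomial.X - 1 : Polynomial ℤ) ∣ κ s t := by
  -- f s t = value at 1
  set f : α → α → ℤ := fun s t => (κ s t).eval 1 with hf
  have hrev : ∀ s t : α, s ≤ t → (irev ρ κ s t).eval 1 = f s t := by
    intro s t hst
    apply eval_one_reflect
    have h0 : (0 : ℤ) ≤ ρ t - ρ s := by linarith [hρ s t hst]
    exact (Int.le_toNat h0).mpr (hdeg s t hst)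
  -- key claim by strong induction on the size of the interval
  have key : ∀ n : ℕ, ∀ s t : α, s < t →
      (Finset.univ.filter (fun w => s ≤ w ∧ w ≤ t)).card = n → f s t = 0 := by
    intro n
    induction n using Nat.strong_induction_on with
    | _ n ih =>
      intro s t hst hcard
      have hle := hst.le
      have hsum := hker₁ s t hle
      have heval := congrArg (Polynomial.eval 1) hsum
      rw [iconv, idelta] at heval
      simp only [if_neg hst.ne, Polynomial.eval_zero, Polynomial.eval_finset_sum,
        Polynomial.eval_mul] at heval
      set S := Finset.univ.filter (fun w => s ≤ w ∧ w ≤ t) with hS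
      have hsS : s ∈ S := by simp [hS, hle]
      have htS : t ∈ S.erase s := by
        simp [hS, hle, hst.ne']
      have hmid : ∀ w ∈ (S.erase s).erase t,
          (κ s w).eval 1 * (irev ρ κ w t).eval 1 = 0 := by
        intro w hw
        have hwt : w ≠ t := (Finset.mem_erase.mp hw).1
        have hw' := (Finset.mem_erase.mp hw).2
        have hws : w ≠ s := (Finset.mem_erase.mp hw').1
        have hwS : w ∈ S := (Finset.mem_erase.mp hw').2
        simp only [hS, Finset.mem_filter] at hwS
        obtain ⟨-, hsw, hwt'⟩ := hwS
        have hslt : s < w := lt_of_le_of_ne hsw (Ne.symm hws)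
        have hcard' : (Finset.univ.filter (fun x => s ≤ x ∧ x ≤ w)).card < n := by
          rw [← hcard]
          apply Finset.card_lt_card
          constructor
          · intro x hx
            simp only [hS, Finset.mem_filter] at hx ⊢
            exact ⟨hx.1, hx.2.1, hx.2.2.trans hwt'⟩
          · intro hsub
            have htm : t ∈ S := by simp [hS, hle]
            have : t ∈ Finset.univ.filter (fun x => s ≤ x ∧ x ≤ w) := hsub htm
            simp only [Finset.mem_filter] at this
            exact hwt (le_antisymm hwt' this.2.2)
        have := ih _ hcard' s w hslt rfl
        simp [hf] at this
        simp [this]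
      rw [← Finset.add_sum_erase _ _ hsS, ← Finset.add_sum_erase _ _ htS,
        Finset.sum_eq_zero hmid] at heval
      rw [hdiag s, hrev t t le_rfl, hf] at heval
      simp only [Polynomial.eval_one, one_mul, hdiag t, add_zero] at heval
      rw [hrev s t hle] at heval
      simp only [hf] at heval ⊢
      -- heval : κ s t eval 1 + κ s t eval 1 * 1 = 0  (roughly)
      simp only [Polynomial.eval_one, mul_one] at heval
      linarith
  intro s t hst
  have h0 : (κ s t).eval 1 = 0 := key _ s t hst rfl
  have : (Polynomial.X - Polynomial.C (1 : ℤ)) ∣ κ s t := by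
    rw [Polynomial.dvd_iff_isRoot]
    exact h0
  simpa using this
end

section
/- Let P ⊂ ℝ^n be a convex polytope and ℓ a linear functional nonconstant on every edge of P. For every face G of P and every vertex v of G, there exists a sequence of vertices v = v_0, v_1, ..., v_k = w in G such that each (v_i, v_{i+1}) is an edge of G with ℓ(v_i) < ℓ(v_{i+1}), where w is the vertex of G maximizing ℓ. -/
open Set

variable {V : Type*} [NormedAddCommGroup V] [NormedSpace ℝ V]

/-- A (nonempty) convex polytope: the convex hull of a nonempty finite set of points. -/
def IsPolytope (P : Set V) : Prop :=
  ∃ s : Finset V, s.Nonempty ∧ P = convexHull ℝ (s : Set V)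

/-- A (nonempty exposed) face of a polytope. -/
def IsFace (P F : Set V) : Prop :=
  F.Nonempty ∧ IsExposed ℝ P F

/-- A vertex of a polytope: a point whose singleton is a face. -/
def IsVertex (P : Set V) (v : V) : Prop := IsFace P {v}

/-- An edge of a polytope: a face which is a nondegenerate segment. -/
def IsEdge (P : Set V) (v w : V) : Prop := v ≠ w ∧ IsFace P (segment ℝ v w)

/-- `ℓ` attains its maximum on `G` at `v`. -/
def MaxAt (ℓ : V →L[ℝ] ℝ) (G : Set V) (v : V) : Prop := v ∈ G ∧ ∀ x ∈ G, ℓ x ≤ ℓ v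

/-- `ℓ` attains its minimum on `G` at `v`. -/
def MinAt (ℓ : V →L[ℝ] ℝ) (G : Set V) (v : V) : Prop := v ∈ G ∧ ∀ x ∈ G, ℓ v ≤ ℓ x

/-- `ℓ` is nonconstant on every edge of `P`. -/
def NonconstOnEdges (P : Set V) (ℓ : V →L[ℝ] ℝ) : Prop :=
  ∀ v w, IsEdge P v w → ℓ v ≠ ℓ w

/-- Directed edge: an edge oriented by increasing `ℓ`. -/
def DirEdge (P : Set V) (ℓ : V →L[ℝ] ℝ) (v w : V) : Prop := IsEdge P v w ∧ ℓ v < ℓ w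

/-- The witness relation `O(v,w)`: some face of `P` has ℓ-minimum at `v` and
ℓ-maximum at `w`. -/
def ORel (P : Set V) (ℓ : V →L[ℝ] ℝ) (v w : V) : Prop :=
  ∃ G, IsFace P G ∧ MinAt ℓ G v ∧ MaxAt ℓ G w

/-- `O⁻(v)`: the union of relative interiors of faces of `P` on which `ℓ` attains
its maximum at `v`. -/
def Oneg (P : Set V) (ℓ : V →L[ℝ] ℝ) (v : V) : Set V :=
  ⋃ G ∈ {G : Set V | IsFace P G ∧ MaxAt ℓ G v}, intrinsicInterior ℝ G

/-- `O⁺(v)`: the union of relative interiors of faces of `P` on which `ℓ` attains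
its minimum at `v`. -/
def Opos (P : Set V) (ℓ : V →L[ℝ] ℝ) (v : V) : Set V :=
  ⋃ G ∈ {G : Set V | IsFace P G ∧ MinAt ℓ G v}, intrinsicInterior ℝ G

/-- `F⁻(v)`: the closure of `O⁻(v)`. -/
def Fneg (P : Set V) (ℓ : V →L[ℝ] ℝ) (v : V) : Set V := closure (Oneg P ℓ v)

/-- `F⁺(v)`: the closure of `O⁺(v)`. -/
def Fpos (P : Set V) (ℓ : V →L[ℝ] ℝ) (v : V) : Set V := closure (Opos P ℓ v)

/-- The partition `O⁻` is a stratification. -/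
def StratNeg (P : Set V) (ℓ : V →L[ℝ] ℝ) : Prop :=
  ∀ u w : V, IsVertex P u → IsVertex P w →
    (Oneg P ℓ u ∩ Fneg P ℓ w).Nonempty → Oneg P ℓ u ⊆ Fneg P ℓ w

/-- The dimension of a subset of `V` (dimension of its affine span). -/
noncomputable def dimS (F : Set V) : ℕ := Module.finrank ℝ (vectorSpan ℝ F)

section Aux
set_option linter.unusedSectionVars false


open Classical in
/-- The set of points of `t` on which `g` is maximal. -/
noncomputable def argmaxSet (t : Finset V) (g : V →L[ℝ] ℝ) : Finset V :=
  t.filter (fun x => ∀ y ∈ t, g y ≤ g x)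

lemma argmaxSet_subset (t : Finset V) (g : V →L[ℝ] ℝ) : argmaxSet t g ⊆ t :=
  Finset.filter_subset _ _

lemma mem_argmaxSet {t : Finset V} {g : V →L[ℝ] ℝ} {x : V} :
    x ∈ argmaxSet t g ↔ x ∈ t ∧ ∀ y ∈ t, g y ≤ g x := by
  classical
  simp [argmaxSet]

lemma argmaxSet_nonempty {t : Finset V} (ht : t.Nonempty) (g : V →L[ℝ] ℝ) :
    (argmaxSet t g).Nonempty := by
  obtain ⟨z, hz, hzm⟩ := t.exists_max_image g ht
  exact ⟨z, mem_argmaxSet.2 ⟨hz, hzm⟩⟩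

lemma argmaxSet_const_on {t : Finset V} {g : V →L[ℝ] ℝ} {x y : V}
    (hx : x ∈ argmaxSet t g) (hy : y ∈ argmaxSet t g) : g x = g y := by
  rw [mem_argmaxSet] at hx hy
  exact le_antisymm (hy.2 x hx.1) (hx.2 y hy.1)

lemma le_on_convexHull {t : Finset V} {g : V →L[ℝ] ℝ} {z : V}
    (hz : ∀ y ∈ t, g y ≤ g z) {x : V} (hx : x ∈ convexHull ℝ (t : Set V)) : g x ≤ g z := by
  have : convexHull ℝ (t : Set V) ⊆ {w | g w ≤ g z} :=
    convexHull_min (fun y hy => hz y hy) (convex_halfSpace_le g.toLinearMap.isLinear (g z))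
  exact this hx

/-- The exposed set of `convexHull t` determined by `g` is the hull of `argmaxSet t g`. -/
lemma faceOf_convexHull (t : Finset V) (ht : t.Nonempty) (g : V →L[ℝ] ℝ) :
    {x ∈ convexHull ℝ (t : Set V) | ∀ y ∈ convexHull ℝ (t : Set V), g y ≤ g x}
      = convexHull ℝ ((argmaxSet t g : Finset V) : Set V) := by
  classical
  obtain ⟨z, hzS⟩ := argmaxSet_nonempty ht g
  have hz := mem_argmaxSet.1 hzS
  apply Set.Subset.antisymm
  · rintro x ⟨hxt, hxmax⟩
    -- g x = g z
    have hxz : g x = g z := le_antisymm (le_on_convexHull hz.2 hxt)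
      (hxmax z (subset_convexHull ℝ _ hz.1))
    rw [Finset.convexHull_eq] at hxt
    obtain ⟨w, hw0, hw1, hwx⟩ := hxt
    have hxsum : x = ∑ y ∈ t, w y • y := by
      rw [← hwx, Finset.centerMass_eq_of_sum_1 _ _ hw1]; rfl
    have hgx : g x = ∑ y ∈ t, w y * g y := by
      rw [hxsum, map_sum]; simp [smul_eq_mul]
    -- all positive-weight points are in argmaxSet
    have hsupp : ∀ y ∈ t, y ∉ argmaxSet t g → w y = 0 := by
      intro y hy hyS
      by_contra hwy
      have hwy' : 0 < w y := lt_of_le_of_ne (hw0 y hy) (Ne.symm hwy)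
      have hgy : g y < g z := by
        rcases mem_argmaxSet.not.1 hyS with h
        push_neg at h
        obtain ⟨y', hy', hlt⟩ := h hy
        exact lt_of_lt_of_le hlt (hz.2 y' hy')
      have : ∑ y ∈ t, w y * g y < ∑ y ∈ t, w y * g z := by
        apply Finset.sum_lt_sum
        · intro i hi
          exact mul_le_mul_of_nonneg_left (hz.2 i hi) (hw0 i hi)
        · exact ⟨y, hy, by exact mul_lt_mul_of_pos_left hgy hwy'⟩
      rw [← Finset.sum_mul, hw1, one_mul] at this
      rw [← hgx, hxz] at this
      exact lt_irrefl _ this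
    -- now x ∈ convexHull of argmaxSet
    rw [Finset.convexHull_eq]
    refine ⟨w, fun y hy => hw0 y (argmaxSet_subset t g hy), ?_, ?_⟩
    · rw [Finset.sum_subset (argmaxSet_subset t g) hsupp, hw1]
    · rw [Finset.centerMass_eq_of_sum_1]
      · rw [Finset.sum_subset (argmaxSet_subset t g) (fun y hy hyS => by
          rw [hsupp y hy hyS, zero_smul])]
        exact hxsum.symm
      · rw [Finset.sum_subset (argmaxSet_subset t g) hsupp, hw1]
  · intro x hx
    have hxt : x ∈ convexHull ℝ (t : Set V) :=
      convexHull_mono (by exact_mod_cast argmaxSet_subset t g) hx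
    have hxz : g x = g z := by
      have : convexHull ℝ ((argmaxSet t g : Finset V) : Set V) ⊆ {w | g w = g z} :=
        convexHull_min (fun y hy => argmaxSet_const_on (by exact_mod_cast hy) hzS)
          (convex_hyperplane g.toLinearMap.isLinear (g z))
      exact this hx
    exact ⟨hxt, fun y hy => by rw [hxz]; exact le_on_convexHull hz.2 hy⟩


/-- Epsilon perturbation helper: if for each `x ∈ t` either `a x < a u`, or
`a x = a u` and `b x < b u`, then for small `ε > 0`, `a + ε b` is strictly
smaller at every point of `t` than at `u`. -/
lemma eps_helper (t : Finset V) (u : V) (a b : V → ℝ)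
    (h : ∀ x ∈ t, a x < a u ∨ (a x = a u ∧ b x < b u)) :
    ∃ ε : ℝ, 0 < ε ∧ ∀ x ∈ t, a x + ε * b x < a u + ε * b u := by
  classical
  induction t using Finset.induction with
  | empty => exact ⟨1, one_pos, by simp⟩
  | @insert y s hys ih =>
    obtain ⟨ε, hε, hεs⟩ := ih (fun x hx => h x (Finset.mem_insert_of_mem hx))
    -- bound for the new element y
    rcases h y (Finset.mem_insert_self y s) with hy | ⟨hy1, hy2⟩
    · -- a y < a u : choose ε₂ ≤ ε with ε₂ (b y - b u) < a u - a y
      set δ := a u - a y with hδ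
      have hδ0 : 0 < δ := by simp [hδ]; linarith
      set M := |b y - b u| with hM
      have hM0 : 0 ≤ M := abs_nonneg _
      set ε₂ := min ε (δ / (M + 1)) with hε₂def
      have hε₂ : 0 < ε₂ := lt_min hε (div_pos hδ0 (by linarith))
      refine ⟨ε₂, hε₂, ?_⟩
      intro x hx
      rcases Finset.mem_insert.1 hx with rfl | hxs
      · have h1 : ε₂ * (b x - b u) ≤ ε₂ * M := by
          apply mul_le_mul_of_nonneg_left _ hε₂.le
          exact le_abs_self _
        have h2 : ε₂ * M ≤ (δ / (M + 1)) * M :=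
          mul_le_mul_of_nonneg_right (min_le_right _ _) hM0
        have h3 : (δ / (M + 1)) * M < δ := by
          rw [div_mul_eq_mul_div, div_lt_iff₀ (by linarith)]
          nlinarith
        have : ε₂ * (b x - b u) < δ := by linarith
        simp only [hδ] at this
        nlinarith
      · -- x ∈ s : use monotonicity via the disjunction h
        rcases h x (Finset.mem_insert_of_mem hxs) with hax | ⟨hax, hbx⟩
        · -- a x < a u; need ε₂ (b x - b u) < a u - a x. From hεs : ε(bx-bu) < au-ax.
          rcases le_or_gt (b x) (b u) with hb | hb
          · nlinarith [min_le_left ε (δ / (M + 1))]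
          · have := hεs x hxs
            have h4 : ε₂ * (b x - b u) ≤ ε * (b x - b u) :=
              mul_le_mul_of_nonneg_right (min_le_left _ _) (by linarith)
            nlinarith
        · nlinarith
    · -- a y = a u and b y < b u : ε works as is
      refine ⟨ε, hε, ?_⟩
      intro x hx
      rcases Finset.mem_insert.1 hx with rfl | hxs
      · nlinarith
      · exact hεs x hxs

/-- Shifting the exposing functional: the argmax of `g + ε l` over `t` equals the
argmax of `l` over the argmax of `g`, for suitably small `ε > 0`. -/
lemma argmaxSet_argmaxSet (t : Finset V) (ht : t.Nonempty) (g l : V →L[ℝ] ℝ) :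
    ∃ ε : ℝ, 0 < ε ∧ argmaxSet t (g + ε • l) = argmaxSet (argmaxSet t g) l := by
  classical
  set S := argmaxSet t g with hS
  have hSne : S.Nonempty := argmaxSet_nonempty ht g
  set T := argmaxSet S l with hT
  obtain ⟨u0, hu0T⟩ := argmaxSet_nonempty hSne l
  have hu0S : u0 ∈ S := argmaxSet_subset _ _ hu0T
  have hu0t : u0 ∈ t := argmaxSet_subset _ _ hu0S
  obtain ⟨ε, hε, hstrict⟩ := eps_helper (t.filter (· ∉ T)) u0 g l (by
    intro x hx
    rw [Finset.mem_filter] at hx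
    obtain ⟨hxt, hxT⟩ := hx
    by_cases hxS : x ∈ S
    · right
      refine ⟨argmaxSet_const_on hxS hu0S, ?_⟩
      have : ¬ (x ∈ S ∧ ∀ y ∈ S, l y ≤ l x) := fun h => hxT (mem_argmaxSet.2 h)
      push_neg at this
      obtain ⟨y, hy, hlt⟩ := this hxS
      exact lt_of_lt_of_le hlt ((mem_argmaxSet.1 hu0T).2 y hy)
    · left
      have : ¬ (x ∈ t ∧ ∀ y ∈ t, g y ≤ g x) := fun h => hxS (mem_argmaxSet.2 h)
      push_neg at this
      obtain ⟨y, hy, hlt⟩ := this hxt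
      exact lt_of_lt_of_le hlt ((mem_argmaxSet.1 hu0S).2 y hy))
  have happ : ∀ x : V, (g + ε • l) x = g x + ε * l x := by intro x; simp
  refine ⟨ε, hε, ?_⟩
  have hval : ∀ x ∈ T, g x + ε * l x = g u0 + ε * l u0 := by
    intro x hx
    have h1 : g x = g u0 := argmaxSet_const_on (argmaxSet_subset _ _ hx) hu0S
    have h2 : l x = l u0 := argmaxSet_const_on hx hu0T
    rw [h1, h2]
  ext x
  constructor
  · intro hx
    rw [mem_argmaxSet] at hx
    by_contra hxT
    have := hstrict x (Finset.mem_filter.2 ⟨hx.1, hxT⟩)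
    have h2 := hx.2 u0 hu0t
    rw [happ x, happ u0] at h2
    linarith
  · intro hx
    refine mem_argmaxSet.2 ⟨argmaxSet_subset _ _ (argmaxSet_subset _ _ hx), ?_⟩
    intro y hy
    rw [happ x, happ y, hval x hx]
    by_cases hyT : y ∈ T
    · rw [hval y hyT]
    · exact (hstrict y (Finset.mem_filter.2 ⟨hy, hyT⟩)).le

lemma exposed_hull_argmax (t : Finset V) (ht : t.Nonempty) (g : V →L[ℝ] ℝ) :
    IsExposed ℝ (convexHull ℝ (t : Set V)) (convexHull ℝ ((argmaxSet t g : Finset V) : Set V)) :=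
  fun _ => ⟨g, (faceOf_convexHull t ht g).symm⟩

/-- `f` exposes `v` strictly among the points of `t`. -/
def StrictExpose (t : Finset V) (f : V →L[ℝ] ℝ) (v : V) : Prop :=
  v ∈ t ∧ ∀ x ∈ t, x ≠ v → f x < f v

/-- A face of the hull of the argmax set is a face of the hull of `t`. -/
lemma face_trans (t : Finset V) (ht : t.Nonempty) (g : V →L[ℝ] ℝ) {E : Set V}
    (hE : IsFace (convexHull ℝ ((argmaxSet t g : Finset V) : Set V)) E) :
    IsFace (convexHull ℝ (t : Set V)) E := by
  have hSne := argmaxSet_nonempty ht g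
  obtain ⟨l, hl⟩ := hE.2 hE.1
  have hEeq : E = convexHull ℝ ((argmaxSet (argmaxSet t g) l : Finset V) : Set V) := by
    rw [hl, faceOf_convexHull _ hSne l]
  obtain ⟨ε, hε, heq⟩ := argmaxSet_argmaxSet t ht g l
  refine ⟨hE.1, ?_⟩
  rw [hEeq, ← heq]
  exact exposed_hull_argmax t ht _

/-- A strictly exposed point of the argmax set is strictly exposed in `t`. -/
lemma strict_lift (t : Finset V) (g h : V →L[ℝ] ℝ) {u : V}
    (hu : StrictExpose (argmaxSet t g) h u) : ∃ h', StrictExpose t h' u := by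
  classical
  obtain ⟨huS, hstr⟩ := hu
  have hut : u ∈ t := argmaxSet_subset _ _ huS
  obtain ⟨ε, hε, hstrict⟩ := eps_helper (t.erase u) u g h (by
    intro x hx
    obtain ⟨hxu, hxt⟩ := Finset.mem_erase.1 hx
    by_cases hxS : x ∈ argmaxSet t g
    · exact Or.inr ⟨argmaxSet_const_on hxS huS, hstr x hxS hxu⟩
    · left
      have : ¬ (x ∈ t ∧ ∀ y ∈ t, g y ≤ g x) := fun hc => hxS (mem_argmaxSet.2 hc)
      push_neg at this
      obtain ⟨y, hy, hlt⟩ := this hxt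
      exact lt_of_lt_of_le hlt ((mem_argmaxSet.1 huS).2 y hy))
  refine ⟨g + ε • h, hut, ?_⟩
  intro x hxt hxu
  have := hstrict x (Finset.mem_erase.2 ⟨hxu, hxt⟩)
  simpa using this

/-- The pivot construction: the critical multiple of `ℓ` added to `f`. -/
lemma exists_pivot (t : Finset V) (f ℓ : V →L[ℝ] ℝ) (v : V)
    (hv : StrictExpose t f v) (hu : ∃ u ∈ t, ℓ v < ℓ u) :
    ∃ c : ℝ, 0 < c ∧ (∀ x ∈ t, f x + c * ℓ x ≤ f v + c * ℓ v)
      ∧ (∃ u ∈ t, ℓ v < ℓ u ∧ f u + c * ℓ u = f v + c * ℓ v)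
      ∧ (∀ x ∈ t, x ≠ v → ℓ x ≤ ℓ v → f x + c * ℓ x < f v + c * ℓ v) := by
  classical
  obtain ⟨u0, hu0, hlu0⟩ := hu
  set A := t.filter (fun x => ℓ v < ℓ x) with hA
  have hAne : A.Nonempty := ⟨u0, Finset.mem_filter.2 ⟨hu0, hlu0⟩⟩
  set ratio : V → ℝ := fun x => (f v - f x) / (ℓ x - ℓ v) with hratio
  set c := A.inf' hAne ratio with hc
  have hmemA : ∀ x ∈ A, x ∈ t ∧ ℓ v < ℓ x := fun x hx => Finset.mem_filter.1 hx
  have hfx : ∀ x ∈ A, f x < f v := by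
    intro x hx
    obtain ⟨hxt, hlx⟩ := hmemA x hx
    exact hv.2 x hxt (by rintro rfl; exact lt_irrefl _ hlx)
  have hcpos : 0 < c := by
    rw [hc, Finset.lt_inf'_iff]
    intro x hx
    obtain ⟨hxt, hlx⟩ := hmemA x hx
    exact div_pos (by linarith [hfx x hx]) (by linarith)
  refine ⟨c, hcpos, ?_, ?_, ?_⟩
  · intro x hxt
    by_cases hxv : x = v
    · subst hxv; exact le_rfl
    · by_cases hlx : ℓ v < ℓ x
      · have hxA : x ∈ A := Finset.mem_filter.2 ⟨hxt, hlx⟩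
        have h1 : c ≤ ratio x := Finset.inf'_le _ hxA
        rw [hratio] at h1
        have h2 : c * (ℓ x - ℓ v) ≤ f v - f x := by
          rw [← le_div_iff₀ (by linarith)]; exact h1
        linarith
      · push_neg at hlx
        have := hv.2 x hxt hxv
        nlinarith
  · obtain ⟨u, huA, hcu⟩ := Finset.exists_mem_eq_inf' hAne ratio
    obtain ⟨hut, hlu⟩ := hmemA u huA
    refine ⟨u, hut, hlu, ?_⟩
    have : (f v - f u) / (ℓ u - ℓ v) = c := by rw [hc, hcu]
    rw [div_eq_iff (by linarith : ℓ u - ℓ v ≠ 0)] at this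
    linarith [this]
  · intro x hxt hxv hlx
    have := hv.2 x hxt hxv
    nlinarith

/-- Separating a vector from the span of another. -/
lemma exists_perp {d r : V} (hr : ∀ c : ℝ, r ≠ c • d) :
    ∃ φ : V →L[ℝ] ℝ, φ d = 0 ∧ φ r = 1 := by
  set W : Submodule ℝ V := Submodule.span ℝ {d} with hW
  have hrW : r ∉ (W : Set V) := by
    intro hmem
    obtain ⟨c, hcd⟩ := Submodule.mem_span_singleton.1 hmem
    exact hr c hcd.symm
  obtain ⟨f, u, hfW, hfr⟩ := geometric_hahn_banach_closed_point
    W.convex W.closed_of_finiteDimensional hrW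
  have hu0 : 0 < u := by
    have := hfW 0 (Submodule.zero_mem W)
    simpa using this
  have hfd : f d = 0 := by
    by_contra hfd
    have hmem : ((u + 1) / f d) • d ∈ (W : Set V) :=
      Submodule.smul_mem _ _ (Submodule.mem_span_singleton_self d)
    have := hfW _ hmem
    rw [map_smul, smul_eq_mul, div_mul_cancel₀ _ hfd] at this
    linarith
  have hfr0 : f r ≠ 0 := by intro h; rw [h] at hfr; linarith
  refine ⟨(f r)⁻¹ • f, ?_, ?_⟩
  · simp [hfd]
  · simp [inv_mul_cancel₀ hfr0]

/-- The collinear case: all of `t` lies on the ray from `v` through `u0`, and `v`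
is the strict `ℓ`-minimum; then `convexHull t` is itself an edge from `v`. -/
lemma collinear_case (t : Finset V) (ℓ : V →L[ℝ] ℝ) (v u0 : V)
    (hvt : v ∈ t) (hu0 : u0 ∈ t) (hl : ℓ v < ℓ u0)
    (hall : ∀ x ∈ t, x ≠ v → ℓ v < ℓ x)
    (hcol : ∀ r ∈ t, ∃ c : ℝ, r - v = c • (u0 - v)) :
    ∃ u, u ∈ t ∧ ℓ v < ℓ u ∧ IsEdge (convexHull ℝ (t : Set V)) v u
      ∧ StrictExpose t ℓ u := by
  classical
  set d := u0 - v with hd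
  have hld : 0 < ℓ d := by rw [hd]; simp only [map_sub]; linarith
  have hdne : d ≠ 0 := fun h => by rw [h] at hld; simp at hld
  -- coefficient of each point
  have hrep : ∀ x ∈ t, ∃ c : ℝ, x - v = c • d := hcol
  choose co hco using hrep
  have hlco : ∀ x (hx : x ∈ t), ℓ x - ℓ v = co x hx * ℓ d := by
    intro x hx
    have := congrArg ℓ (hco x hx)
    simpa [map_sub, smul_eq_mul] using this
  obtain ⟨m, hm, hmmax⟩ := t.exists_max_image ℓ ⟨v, hvt⟩
  have hlm : ℓ v < ℓ m := lt_of_lt_of_le hl (hmmax u0 hu0)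
  have hmv : m ≠ v := fun h => by rw [h] at hlm; exact lt_irrefl _ hlm
  have hcm : 0 < co m hm := by
    have := hlco m hm
    nlinarith
  -- t ⊆ segment v m
  have hseg : (t : Set V) ⊆ segment ℝ v m := by
    intro x hx
    have hx' : x ∈ t := hx
    have hxv : x - v = co x hx' • d := hco x hx'
    have hc0 : 0 ≤ co x hx' := by
      by_cases hxveq : x = v
      · subst hxveq
        have : co x hx' • d = 0 := by rw [← hxv]; simp
        rcases smul_eq_zero.1 this with h | h
        · exact le_of_eq h.symm
        · exact absurd h hdne
      · have h1 := hall x hx' hxveq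
        have h2 := hlco x hx'
        nlinarith
    have hcle : co x hx' ≤ co m hm := by
      have h1 := hmmax x hx'
      have h2 := hlco x hx'
      have h3 := hlco m hm
      nlinarith
    rw [segment_eq_image']
    refine ⟨co x hx' / co m hm, ⟨div_nonneg hc0 hcm.le, (div_le_one hcm).2 hcle⟩, ?_⟩
    have hmd : m - v = co m hm • d := hco m hm
    show v + (co x hx' / co m hm) • (m - v) = x
    rw [hmd, smul_smul, div_mul_cancel₀ _ (ne_of_gt hcm), ← hxv]
    abel
  have hsege : convexHull ℝ (t : Set V) = segment ℝ v m := by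
    apply Set.Subset.antisymm
    · exact convexHull_min hseg (convex_segment v m)
    · rw [← convexHull_pair]
      exact convexHull_mono (by
        rintro x (rfl | rfl)
        · exact hvt
        · exact hm)
  refine ⟨m, hm, hlm, ⟨Ne.symm hmv, ?_, ?_⟩, hm, ?_⟩
  · exact ⟨v, left_mem_segment ℝ v m⟩
  · have hre : IsExposed ℝ (convexHull ℝ (t : Set V)) (segment ℝ v m) := by
      rw [hsege]
    exact hre
  · intro x hxt hxm
    rcases lt_or_eq_of_le (hmmax x hxt) with h | h
    · exact h
    · exfalso
      have h2 := hlco x hxt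
      have h3 := hlco m hm
      have hcc : co x hxt = co m hm := by
        have h4 : co x hxt * ℓ d = co m hm * ℓ d := by rw [← h2, ← h3, h]
        exact mul_right_cancel₀ (ne_of_gt hld) h4
      apply hxm
      have : x - v = m - v := by rw [hco x hxt, hco m hm, hcc]
      have := sub_left_injective this
      exact this

/-- Main lemma: a strictly exposed point of a polytope which does not maximize `ℓ`
has an increasing edge, whose endpoint is again strictly exposed. -/
lemma lemA : ∀ (n : ℕ) (t : Finset V), t.card ≤ n → ∀ (f ℓ : V →L[ℝ] ℝ) (v : V),
    StrictExpose t f v → (∃ u0 ∈ t, ℓ v < ℓ u0) →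
    ∃ u h, u ∈ t ∧ ℓ v < ℓ u ∧ IsEdge (convexHull ℝ (t : Set V)) v u
      ∧ StrictExpose t h u := by
  intro n
  induction n with
  | zero =>
    intro t hcard f ℓ v hv _
    have : t = ∅ := Finset.card_eq_zero.1 (Nat.le_zero.1 hcard)
    rw [this] at hv
    exact absurd hv.1 (Finset.notMem_empty v)
  | succ n ih =>
    intro t hcard f ℓ v hv hu
    classical
    obtain ⟨u0, hu0t, hu0l⟩ := hu
    have htne : t.Nonempty := ⟨v, hv.1⟩
    -- the generic recursion step into a proper argmax subset
    have step : ∀ (g' : V →L[ℝ] ℝ), v ∈ argmaxSet t g' →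
        (∃ u ∈ argmaxSet t g', ℓ v < ℓ u) → argmaxSet t g' ≠ t →
        ∃ u h, u ∈ t ∧ ℓ v < ℓ u ∧ IsEdge (convexHull ℝ (t : Set V)) v u
          ∧ StrictExpose t h u := by
      intro g' hvS' hus' hne
      have hsub := argmaxSet_subset t g'
      have hcard' : (argmaxSet t g').card ≤ n := by
        have : (argmaxSet t g').card < t.card :=
          Finset.card_lt_card (Finset.ssubset_iff_subset_ne.2 ⟨hsub, hne⟩)
        omega
      have hvstrict : StrictExpose (argmaxSet t g') f v :=
        ⟨hvS', fun x hx hxv => hv.2 x (hsub hx) hxv⟩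
      obtain ⟨u, h, huS', hul, hedge, hstr⟩ := ih (argmaxSet t g') hcard' f ℓ v hvstrict hus'
      obtain ⟨h', hh'⟩ := strict_lift t g' h hstr
      exact ⟨u, h', hsub huS', hul, ⟨hedge.1, face_trans t htne g' hedge.2⟩, hh'⟩
    obtain ⟨c, hc, hle, hex1, hstrictlow⟩ := exists_pivot t f ℓ v hv ⟨u0, hu0t, hu0l⟩
    obtain ⟨u1, hu1t, hu1l, hu1e⟩ := hex1
    set g := f + c • ℓ with hg
    have happ : ∀ x : V, g x = f x + c * ℓ x := fun x => by simp [hg]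
    have hvS : v ∈ argmaxSet t g := mem_argmaxSet.2 ⟨hv.1, fun y hy => by
      rw [happ y, happ v]; exact hle y hy⟩
    have hu1S : u1 ∈ argmaxSet t g := mem_argmaxSet.2 ⟨hu1t, fun y hy => by
      rw [happ y, happ u1, hu1e]; exact hle y hy⟩
    by_cases hSt : argmaxSet t g = t
    case neg => exact step g hvS ⟨u1, hu1S, hu1l⟩ hSt
    case pos =>
    -- argmax is everything: `g` is constant on `t` and `v` is the strict `ℓ`-min
    have hgconst : ∀ x ∈ t, f x + c * ℓ x = f v + c * ℓ v := by
      intro x hxt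
      have hxS : x ∈ argmaxSet t g := by rw [hSt]; exact hxt
      have h1 := argmaxSet_const_on hxS hvS
      rw [happ x, happ v] at h1
      exact h1
    have halll : ∀ x ∈ t, x ≠ v → ℓ v < ℓ x := by
      intro x hxt hxv
      by_contra hle'
      push_neg at hle'
      have := hstrictlow x hxt hxv hle'
      have := hgconst x hxt
      linarith
    by_cases hcol : ∀ r ∈ t, ∃ cc : ℝ, r - v = cc • (u0 - v)
    case pos =>
      obtain ⟨u, hu, hul, hedge, hstr⟩ := collinear_case t ℓ v u0 hv.1 hu0t hu0l halll hcol
      exact ⟨u, ℓ, hu, hul, hedge, hstr⟩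
    case neg =>
      push_neg at hcol
      obtain ⟨r, hrt, hrc⟩ := hcol
      obtain ⟨φ, hφd, hφr⟩ := exists_perp (d := u0 - v) (r := r - v) hrc
      obtain ⟨ε, hε, hεs⟩ := eps_helper (t.erase v) v f φ (fun x hx =>
        Or.inl (hv.2 x (Finset.mem_erase.1 hx).2 (Finset.mem_erase.1 hx).1))
      set f' := f + ε • φ with hf'
      have hf'app : ∀ x : V, f' x = f x + ε * φ x := fun x => by simp [hf']
      have hv' : StrictExpose t f' v := ⟨hv.1, fun x hxt hxv => by
        have := hεs x (Finset.mem_erase.2 ⟨hxv, hxt⟩)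
        rw [hf'app x, hf'app v]; exact this⟩
      obtain ⟨c', hc', hle', hex2, _⟩ := exists_pivot t f' ℓ v hv' ⟨u0, hu0t, hu0l⟩
      obtain ⟨u2, hu2t, hu2l, hu2e⟩ := hex2
      set g' := f' + c' • ℓ with hg'
      have happ' : ∀ x : V, g' x = f' x + c' * ℓ x := fun x => by simp [hg']
      have hvS' : v ∈ argmaxSet t g' := mem_argmaxSet.2 ⟨hv.1, fun y hy => by
        rw [happ' y, happ' v]; exact hle' y hy⟩
      have hu2S' : u2 ∈ argmaxSet t g' := mem_argmaxSet.2 ⟨hu2t, fun y hy => by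
        rw [happ' y, happ' u2, hu2e]; exact hle' y hy⟩
      have hne' : argmaxSet t g' ≠ t := by
        intro hEq
        have hg'const : ∀ x ∈ t, f' x + c' * ℓ x = f' v + c' * ℓ v := by
          intro x hxt
          have hxS : x ∈ argmaxSet t g' := by rw [hEq]; exact hxt
          have h1 := argmaxSet_const_on hxS hvS'
          rw [happ' x, happ' v] at h1
          exact h1
        have e1 : φ u0 - φ v = 0 := by rw [← map_sub]; exact hφd
        have e2 : φ r - φ v = 1 := by rw [← map_sub]; exact hφr
        have b1 := hgconst u0 hu0t
        have b2 := hg'const u0 hu0t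
        have b3 := hgconst r hrt
        have b4 := hg'const r hrt
        rw [hf'app u0, hf'app v] at b2
        rw [hf'app r, hf'app v] at b4
        -- from b1, b2, e1 : (c' - c) * (ℓ u0 - ℓ v) = 0, and ℓ u0 - ℓ v > 0 so c' = c
        have hccc : c' = c := by
          have h5 : (c' - c) * (ℓ u0 - ℓ v) = 0 := by
            linear_combination b2 - b1 - ε * e1
          rcases mul_eq_zero.1 h5 with h6 | h6
          · linarith
          · linarith
        -- then at r : ε * (φ r - φ v) = 0, contradiction with ε > 0
        rw [hccc] at b4
        have hεz : ε = 0 := by linear_combination b4 - b3 - ε * e2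
        linarith
      exact step g' hvS' ⟨u2, hu2S', hu2l⟩ hne'

/-- A strictly exposed point is joined to a maximizer by a directed chain. -/
lemma chain_lemma (t : Finset V) (ℓ : V →L[ℝ] ℝ) :
    ∀ (n : ℕ) (v : V) (f : V →L[ℝ] ℝ), StrictExpose t f v →
      (t.filter (fun x => ℓ v < ℓ x)).card ≤ n →
      ∃ w, MaxAt ℓ (convexHull ℝ (t : Set V)) w ∧
        Relation.ReflTransGen (DirEdge (convexHull ℝ (t : Set V)) ℓ) v w := by
  classical
  have done : ∀ (v : V), v ∈ t → (t.filter (fun x => ℓ v < ℓ x)) = ∅ →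
      MaxAt ℓ (convexHull ℝ (t : Set V)) v := by
    intro v hvt hemp
    have hmax : ∀ y ∈ t, ℓ y ≤ ℓ v := by
      intro y hy
      by_contra hcon
      push_neg at hcon
      have : y ∈ t.filter (fun x => ℓ v < ℓ x) := Finset.mem_filter.2 ⟨hy, hcon⟩
      rw [hemp] at this
      exact absurd this (Finset.notMem_empty y)
    exact ⟨subset_convexHull ℝ _ hvt, fun x hx => le_on_convexHull hmax hx⟩
  intro n
  induction n with
  | zero =>
    intro v f hv hcard
    exact ⟨v, done v hv.1 (Finset.card_eq_zero.1 (Nat.le_zero.1 hcard)),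
      Relation.ReflTransGen.refl⟩
  | succ n ih =>
    intro v f hv hcard
    by_cases hem : (t.filter (fun x => ℓ v < ℓ x)).Nonempty
    · obtain ⟨u0, hu0⟩ := hem
      obtain ⟨hu0t, hu0l⟩ := Finset.mem_filter.1 hu0
      obtain ⟨u, h, hut, hul, hedge, hstr⟩ := lemA t.card t le_rfl f ℓ v hv ⟨u0, hu0t, hu0l⟩
      have hsub2 : t.filter (fun x => ℓ u < ℓ x) ⊆ t.filter (fun x => ℓ v < ℓ x) := by
        intro x hx
        obtain ⟨hxt, hxl⟩ := Finset.mem_filter.1 hx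
        exact Finset.mem_filter.2 ⟨hxt, lt_trans hul hxl⟩
      have hss : t.filter (fun x => ℓ u < ℓ x) ⊂ t.filter (fun x => ℓ v < ℓ x) :=
        (Finset.ssubset_iff_of_subset hsub2).2
          ⟨u, Finset.mem_filter.2 ⟨hut, hul⟩, fun hc =>
            absurd (Finset.mem_filter.1 hc).2 (lt_irrefl _)⟩
      have hcard2 : (t.filter (fun x => ℓ u < ℓ x)).card ≤ n := by
        have h1 := Finset.card_lt_card hss
        omega
      obtain ⟨w, hw, hchain⟩ := ih u h hstr hcard2
      exact ⟨w, hw, Relation.ReflTransGen.head ⟨hedge, hul⟩ hchain⟩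
    · rw [Finset.not_nonempty_iff_eq_empty] at hem
      exact ⟨v, done v hv.1 hem, Relation.ReflTransGen.refl⟩

end Aux

/-- In a face `G` of `P`, every vertex is connected to the
ℓ-maximizing vertex of `G` by a chain of directed edges of `G`. -/
theorem stmt8 (P : Set V) (hP : IsPolytope P) (ℓ : V →L[ℝ] ℝ)
    (hℓ : NonconstOnEdges P ℓ)
    (G : Set V) (hG : IsFace P G) (v : V) (hv : IsVertex G v) :
    ∃ w : V, MaxAt ℓ G w ∧ Relation.ReflTransGen (DirEdge G ℓ) v w := by
  classical
  obtain ⟨s, hs, hPeq⟩ := hP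
  subst hPeq
  obtain ⟨g0, hG0⟩ := hG.2 hG.1
  set t := argmaxSet s g0 with ht
  have htne : t.Nonempty := argmaxSet_nonempty hs g0
  have hGeq : G = convexHull ℝ ((t : Finset V) : Set V) := by
    rw [hG0, faceOf_convexHull s hs g0]
  obtain ⟨f, hf⟩ := hv.2 hv.1
  have hveq : ({v} : Set V) = convexHull ℝ ((argmaxSet t f : Finset V) : Set V) := by
    rw [hf, hGeq, faceOf_convexHull t htne f]
  have hvmem : v ∈ argmaxSet t f := by
    obtain ⟨z, hz⟩ := argmaxSet_nonempty htne f
    have : z ∈ convexHull ℝ ((argmaxSet t f : Finset V) : Set V) :=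
      subset_convexHull ℝ _ hz
    rw [← hveq] at this
    rw [Set.mem_singleton_iff] at this
    rwa [this] at hz
  have hstrict : StrictExpose t f v := by
    obtain ⟨hvt, hvmax⟩ := mem_argmaxSet.1 hvmem
    refine ⟨hvt, ?_⟩
    intro x hxt hxv
    by_contra hcon
    push_neg at hcon
    have hxmem : x ∈ argmaxSet t f := mem_argmaxSet.2 ⟨hxt, fun y hy =>
      le_trans (hvmax y hy) hcon⟩
    have : x ∈ convexHull ℝ ((argmaxSet t f : Finset V) : Set V) :=
      subset_convexHull ℝ _ hxmem
    rw [← hveq, Set.mem_singleton_iff] at this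
    exact hxv this
  rw [hGeq]
  exact chain_lemma t ℓ (t.filter (fun x => ℓ v < ℓ x)).card v f hstrict le_rfl
end

section
/- Let P ⊂ ℝ^n be a convex polytope with linear functional ℓ nonconstant on edges. Define the witness relation O(v,w) iff there exists a face G of P with ℓ attaining its minimum on G at v and maximum at w, and define the chain order C as the reflexive transitive closure of the directed-edge relation (v → w iff (v,w) is an edge with ℓ(v) < ℓ(w)). Then C equals the reflexive transitive closure of O. -/
open Set

variable {V : Type*} [NormedAddCommGroup V] [NormedSpace ℝ V]

/-!
Every face of a polytope is the convex hull of the generators it contains (Krein–Milman), and a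
face of a face is a face. At a vertex `v` where `ℓ` is not maximal, rotating the hyperplane that
supports `v` towards `ℓ` exposes a face through `v` on which `ℓ` increases away from `v`; shrinking
it by further rotations yields an edge along which `ℓ` increases. Since `ℓ` is nonconstant on
edges, its maximizer on a face is a unique vertex, so from the `ℓ`-minimal vertex of a face one
climbs edges to the `ℓ`-maximal one. Thus each witness `O(v, w)` is a chain of directed edges, and
each directed edge is a witness through the segment itself.
-/

open Filter Topology

section TopologicalVectorSpace

variable {E : Type*} [AddCommGroup E] [Module ℝ E] [TopologicalSpace E]

theorem ContinuousLinearMap.le_of_mem_convexHull {s : Set E} {g : E →L[ℝ] ℝ} {c : ℝ}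
    (hg : ∀ p ∈ s, g p ≤ c) {x : E} (hx : x ∈ convexHull ℝ s) : g x ≤ c :=
  convexHull_min hg (convex_halfSpace_le g.toLinearMap.isLinear c) hx

theorem isExposed_convexHull_sep_eq {s : Set E} {g : E →L[ℝ] ℝ} {c : ℝ}
    (hg : ∀ p ∈ s, g p ≤ c) :
    IsExposed ℝ (convexHull ℝ s) {x ∈ convexHull ℝ s | g x = c} := by
  rintro ⟨x₀, hx₀, rfl⟩
  refine ⟨g, Set.ext fun x => ⟨fun ⟨hx, hgx⟩ => ⟨hx, fun y hy => ?_⟩,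
    fun ⟨hx, hmax⟩ => ⟨hx, le_antisymm (g.le_of_mem_convexHull hg hx) (hmax x₀ hx₀)⟩⟩⟩
  exact hgx ▸ g.le_of_mem_convexHull hg hy

theorem IsExposed.exists_eq_sep {A B : Set E} (hB : IsExposed ℝ A B) (hne : B.Nonempty) :
    ∃ (g : E →L[ℝ] ℝ) (c : ℝ), (∀ x ∈ A, g x ≤ c) ∧ B = {x ∈ A | g x = c} := by
  obtain ⟨g, rfl⟩ := hB hne
  obtain ⟨x₀, hx₀A, hx₀⟩ := hne
  refine ⟨g, g x₀, hx₀, Set.ext fun x => ⟨fun ⟨hx, hmax⟩ => ⟨hx, ?_⟩,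
    fun ⟨hx, hgx⟩ => ⟨hx, fun y hy => hgx ▸ hx₀ y hy⟩⟩⟩
  exact le_antisymm (hx₀ x hx) (hmax x₀ hx₀A)

theorem mem_of_isExposed_convexHull_singleton {s : Set E} {v : E}
    (hv : IsExposed ℝ (convexHull ℝ s) {v}) : v ∈ s :=
  extremePoints_convexHull_subset hv.isExtreme.mem_extremePoints

/-- Rotate the hyperplane `f = f v` supporting the vertex `v` around `v`, towards `h`, until it
meets another point of `s`. -/
theorem exists_rotation (s : Finset E) {v : E} (f h : E →L[ℝ] ℝ)
    (hf : ∀ p ∈ s, p ≠ v → f p < f v) (hne : ∃ p ∈ s, p ≠ v) :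
    ∃ R : ℝ, (∀ p ∈ s, (R • f + h) p ≤ (R • f + h) v) ∧
      ∃ p ∈ s, p ≠ v ∧ (R • f + h) p = (R • f + h) v := by
  classical
  have herase : (s.erase v).Nonempty := by
    obtain ⟨p, hp, hpv⟩ := hne
    exact ⟨p, Finset.mem_erase.2 ⟨hpv, hp⟩⟩
  obtain ⟨p₀, hp₀, hmax⟩ :=
    (s.erase v).exists_max_image (fun p => (h p - h v) / (f v - f p)) herase
  obtain ⟨hp₀v, hp₀s⟩ := Finset.mem_erase.1 hp₀
  refine ⟨(h p₀ - h v) / (f v - f p₀), fun p hp => ?_, p₀, hp₀s, hp₀v, ?_⟩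
  · rcases eq_or_ne p v with rfl | hpv
    · exact le_rfl
    have := (div_le_iff₀ (sub_pos.2 (hf p hp hpv))).1 (hmax p (Finset.mem_erase.2 ⟨hpv, hp⟩))
    simp only [add_apply, smul_apply, smul_eq_mul]
    linarith
  · have := div_mul_cancel₀ (h p₀ - h v) (sub_pos.2 (hf p₀ hp₀s hp₀v)).ne'
    simp only [add_apply, smul_apply, smul_eq_mul]
    linarith

theorem exists_convexHull_eq_segment (s : Finset E) {v : E} {f : E →L[ℝ] ℝ} (hv : v ∈ s)
    (hf : ∀ p ∈ s, p ≠ v → f p < f v) (hne : ∃ p ∈ s, p ≠ v)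
    (hcol : ∀ p ∈ s, ∀ q ∈ s, (f v - f q) • (p - v) = (f v - f p) • (q - v)) :
    ∃ u ∈ s, u ≠ v ∧ convexHull ℝ ↑s = segment ℝ v u := by
  obtain ⟨u, hu, hmin⟩ := s.exists_min_image f ⟨v, hv⟩
  have huv : u ≠ v := by
    rintro rfl
    obtain ⟨p, hp, hpu⟩ := hne
    exact (hmin p hp).not_gt (hf p hp hpu)
  have hfu : 0 < f v - f u := sub_pos.2 (hf u hu huv)
  refine ⟨u, hu, huv, subset_antisymm (convexHull_min (fun p hp => ?_) (convex_segment v u)) ?_⟩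
  · have hfp : f p ≤ f v := (eq_or_ne p v).elim (fun h => h ▸ le_rfl) fun h => (hf p hp h).le
    rw [segment_eq_image']
    refine ⟨(f v - f p) / (f v - f u), ⟨div_nonneg (sub_nonneg.2 hfp) hfu.le,
      (div_le_one hfu).2 (by linarith [hmin p hp])⟩, ?_⟩
    calc v + ((f v - f p) / (f v - f u)) • (u - v)
        = v + (f v - f u)⁻¹ • ((f v - f p) • (u - v)) := by rw [smul_smul, div_eq_inv_mul]
      _ = v + (f v - f u)⁻¹ • ((f v - f u) • (p - v)) := by rw [hcol p hp u hu]
      _ = p := by rw [inv_smul_smul₀ hfu.ne']; abel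
  · rw [← convexHull_pair]
    exact convexHull_mono (Set.insert_subset (Finset.mem_coe.2 hv)
      (Set.singleton_subset_iff.2 (Finset.mem_coe.2 hu)))

end TopologicalVectorSpace

section LocallyConvexSpace

variable {E : Type*} [AddCommGroup E] [Module ℝ E] [TopologicalSpace E] [T2Space E]
  [IsTopologicalAddGroup E] [ContinuousSMul ℝ E] [LocallyConvexSpace ℝ E]

/-- By Krein–Milman, a face is the closed convex hull of its extreme points, and these are
among the generators. -/
theorem IsExposed.eq_convexHull_inter {s : Set E} (hs : s.Finite) {F : Set E}
    (hF : IsExposed ℝ (convexHull ℝ s) F) : F = convexHull ℝ (s ∩ F) := by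
  have hFc : IsCompact F := hF.isCompact (hs.isCompact_convexHull ℝ)
  have hFcvx : Convex ℝ F := hF.convex (convex_convexHull ℝ s)
  refine subset_antisymm ?_ (convexHull_min Set.inter_subset_right hFcvx)
  calc F = closure (convexHull ℝ (F.extremePoints ℝ)) :=
        (closure_convexHull_extremePoints hFc hFcvx).symm
    _ ⊆ closure (convexHull ℝ (s ∩ F)) := closure_mono <| convexHull_mono fun x hx =>
        ⟨extremePoints_convexHull_subset (hF.isExtreme.extremePoints_subset_extremePoints hx),
          extremePoints_subset hx⟩
    _ = convexHull ℝ (s ∩ F) := ((hs.inter_of_left F).isCompact_convexHull ℝ).isClosed.closure_eq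

theorem convexHull_sep_eq {s : Set E} (hs : s.Finite) {g : E →L[ℝ] ℝ} {c : ℝ}
    (hg : ∀ p ∈ s, g p ≤ c) :
    {x ∈ convexHull ℝ s | g x = c} = convexHull ℝ {p ∈ s | g p = c} := by
  rw [(isExposed_convexHull_sep_eq hg).eq_convexHull_inter hs]
  congr 1
  ext p
  exact ⟨fun ⟨hp, _, hgp⟩ => ⟨hp, hgp⟩, fun ⟨hp, hgp⟩ => ⟨hp, subset_convexHull ℝ s hp, hgp⟩⟩

theorem isExposed_convexHull_convexHull_filter (s : Finset E) {g : E →L[ℝ] ℝ} {c : ℝ}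
    (hg : ∀ p ∈ s, g p ≤ c) [DecidablePred fun p => g p = c] :
    IsExposed ℝ (convexHull ℝ ↑s)
      (convexHull ℝ ((s.filter fun p => g p = c : Finset E) : Set E)) := by
  have h := isExposed_convexHull_sep_eq (s := (s : Set E)) hg
  rw [convexHull_sep_eq s.finite_toSet hg] at h
  rwa [Finset.coe_filter]

/-- The functional `f + ε g` exposes `F` once `ε > 0` is small enough that the generators off
`G` stay strictly below its level on `F`. -/
theorem IsExposed.trans_convexHull {s : Set E} (hs : s.Finite) {G F : Set E}
    (hG : IsExposed ℝ (convexHull ℝ s) G) (hF : IsExposed ℝ G F) :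
    IsExposed ℝ (convexHull ℝ s) F := by
  rcases F.eq_empty_or_nonempty with rfl | hFne
  · exact isExposed_empty
  obtain ⟨f, M, hfM, rfl⟩ := hG.exists_eq_sep (hFne.mono hF.subset)
  obtain ⟨g, m, hgm, rfl⟩ := hF.exists_eq_sep hFne
  have hsmall : ∀ᶠ ε in 𝓝 (0 : ℝ), ∀ p ∈ s, f p < M → f p + ε * (g p - m) < M := by
    refine (eventually_all_finite hs).2 fun p _ => ?_
    by_cases hp : f p < M
    · have hlim : Tendsto (fun ε : ℝ => f p + ε * (g p - m)) (𝓝 0) (𝓝 (f p)) := by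
        have hcont : Continuous fun ε : ℝ => f p + ε * (g p - m) := by fun_prop
        simpa using hcont.tendsto 0
      exact (hlim.eventually_lt_const hp).mono fun _ h _ => h
    · exact Eventually.of_forall fun _ h => absurd h hp
  obtain ⟨ε, hε, hεpos⟩ := ((hsmall.filter_mono nhdsWithin_le_nhds).and
    (self_mem_nhdsWithin : ∀ᶠ ε in 𝓝[>] (0 : ℝ), 0 < ε)).exists
  set k : E →L[ℝ] ℝ := f + ε • g
  have hk : ∀ p ∈ s, k p ≤ M + ε * m ∧ (k p = M + ε * m → f p = M ∧ g p = m) := by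
    intro p hp
    have hkp : k p = f p + ε * g p := rfl
    rcases (hfM p (subset_convexHull ℝ s hp)).lt_or_eq with hlt | heq
    · have := hε p hp hlt
      exact ⟨by linarith, fun h => by linarith⟩
    · have hgp := hgm p ⟨subset_convexHull ℝ s hp, heq⟩
      refine ⟨by nlinarith, fun h => ⟨heq, ?_⟩⟩
      exact mul_left_cancel₀ hεpos.ne' (by linarith)
  have hFk : {x ∈ {x ∈ convexHull ℝ s | f x = M} | g x = m} =
      {x ∈ convexHull ℝ s | k x = M + ε * m} := by
    apply subset_antisymm
    · rintro x ⟨⟨hx, hfx⟩, hgx⟩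
      exact ⟨hx, show f x + ε * g x = _ by rw [hfx, hgx]⟩
    rw [convexHull_sep_eq hs fun p hp => (hk p hp).1]
    refine convexHull_min (fun p ⟨hp, hkp⟩ => ?_)
      (hF.convex (hG.convex (convex_convexHull ℝ s)))
    obtain ⟨hfp, hgp⟩ := (hk p hp).2 hkp
    exact ⟨⟨subset_convexHull ℝ s hp, hfp⟩, hgp⟩
  rw [hFk]
  exact isExposed_convexHull_sep_eq fun p hp => (hk p hp).1

theorem isExposed_convexHull_singleton_iff {s : Set E} (hs : s.Finite) {v : E} :
    IsExposed ℝ (convexHull ℝ s) {v} ↔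
      v ∈ s ∧ ∃ f : E →L[ℝ] ℝ, ∀ p ∈ s, p ≠ v → f p < f v := by
  refine ⟨fun hv => ⟨mem_of_isExposed_convexHull_singleton hv, ?_⟩, fun ⟨hv, f, hf⟩ => ?_⟩
  · obtain ⟨g, c, hgc, hvc⟩ := hv.exists_eq_sep (Set.singleton_nonempty v)
    have hgv : g v = c := (hvc.subset rfl).2
    refine ⟨g, fun p hp hpv => hgv ▸ (hgc p (subset_convexHull ℝ s hp)).lt_of_ne fun hgp => ?_⟩
    exact hpv (hvc.symm.subset ⟨subset_convexHull ℝ s hp, hgp⟩)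
  · have hle : ∀ p ∈ s, f p ≤ f v := fun p hp =>
      (eq_or_ne p v).elim (fun h => h ▸ le_rfl) fun h => (hf p hp h).le
    have hsep : {x ∈ convexHull ℝ s | f x = f v} = {v} := by
      rw [convexHull_sep_eq hs hle, ← convexHull_singleton (𝕜 := ℝ) v]
      congr 1
      ext p
      exact ⟨fun ⟨hp, hfp⟩ => by_contra fun hpv => (hf p hp hpv).ne hfp,
        fun h => ⟨h ▸ hv, h ▸ rfl⟩⟩
    exact hsep ▸ isExposed_convexHull_sep_eq hle

theorem exists_isExposed_convexHull_singleton (s : Finset E) (hs : s.Nonempty) :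
    ∃ v ∈ s, IsExposed ℝ (convexHull ℝ ↑s) {v} := by
  classical
  induction s using Finset.strongInduction with
  | H s ih =>
  by_cases hsub : (s : Set E).Subsingleton
  · obtain ⟨v, hv⟩ := hs
    refine ⟨v, hv, ?_⟩
    rw [hsub.eq_singleton_of_mem hv, convexHull_singleton]
  obtain ⟨a, ha, b, hb, hab⟩ := Set.not_subsingleton_iff.1 hsub
  obtain ⟨h, hh⟩ := SeparatingDual.exists_separating_of_ne (R := ℝ) hab
  obtain ⟨m, hm, hmax⟩ := s.exists_max_image h hs
  have hts : s.filter (fun p => h p = h m) ⊂ s := Finset.filter_ssubset.2 <| by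
    by_contra! hall
    exact hh ((hall a ha).trans (hall b hb).symm)
  obtain ⟨v, hv, hvexp⟩ := ih _ hts ⟨m, Finset.mem_filter.2 ⟨hm, rfl⟩⟩
  exact ⟨v, (Finset.mem_filter.1 hv).1,
    (isExposed_convexHull_convexHull_filter s hmax).trans_convexHull s.finite_toSet hvexp⟩

/-- If two generators do not lie on a common ray from `v`, rotating towards a functional that
separates their directions exposes a smaller face through `v`. -/
theorem exists_isExposed_segment (s : Finset E) {v : E} {f : E →L[ℝ] ℝ} (hv : v ∈ s)
    (hf : ∀ p ∈ s, p ≠ v → f p < f v) (hne : ∃ p ∈ s, p ≠ v) :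
    ∃ u ∈ s, u ≠ v ∧ IsExposed ℝ (convexHull ℝ ↑s) (segment ℝ v u) := by
  classical
  induction s using Finset.strongInduction with
  | H s ih =>
  by_cases hcol : ∀ p ∈ s, ∀ q ∈ s, (f v - f q) • (p - v) = (f v - f p) • (q - v)
  · obtain ⟨u, hu, huv, heq⟩ := exists_convexHull_eq_segment s hv hf hne hcol
    exact ⟨u, hu, huv, heq ▸ IsExposed.refl _⟩
  push Not at hcol
  obtain ⟨p, hp, q, hq, hpq⟩ := hcol
  obtain ⟨h, hh⟩ := SeparatingDual.exists_ne_zero (R := ℝ) (sub_ne_zero.2 hpq)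
  obtain ⟨R, hle, p₀, hp₀, hp₀v, hp₀eq⟩ := exists_rotation s f h hf hne
  set g : E →L[ℝ] ℝ := R • f + h
  have hts : s.filter (fun x => g x = g v) ⊂ s := by
    refine Finset.filter_ssubset.2 (by_contra fun hall => hh ?_)
    push Not at hall
    have hgp : R * f p + h p = R * f v + h v := hall p hp
    have hgq : R * f q + h q = R * f v + h v := hall q hq
    simp only [map_sub, map_smul, smul_eq_mul]
    linear_combination (f v - f q) * hgp - (f v - f p) * hgq
  obtain ⟨u, hu, huv, hseg⟩ := ih _ hts (Finset.mem_filter.2 ⟨hv, rfl⟩)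
    (fun x hx => hf x (Finset.mem_filter.1 hx).1) ⟨p₀, Finset.mem_filter.2 ⟨hp₀, hp₀eq⟩, hp₀v⟩
  exact ⟨u, (Finset.mem_filter.1 hu).1, huv,
    (isExposed_convexHull_convexHull_filter s hle).trans_convexHull s.finite_toSet hseg⟩

theorem exists_isExposed_segment_of_lt (s : Finset E) {v : E} {f : E →L[ℝ] ℝ} (hv : v ∈ s)
    (hf : ∀ p ∈ s, p ≠ v → f p < f v) (ℓ : E →L[ℝ] ℝ) (hℓ : ∃ p ∈ s, ℓ v < ℓ p) :
    ∃ u ∈ s, ℓ v < ℓ u ∧ IsExposed ℝ (convexHull ℝ ↑s) (segment ℝ v u) := by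
  classical
  obtain ⟨p₁, hp₁, hvp₁⟩ := hℓ
  have hp₁v : p₁ ≠ v := fun h => hvp₁.ne (congrArg ℓ h).symm
  obtain ⟨R, hle, p₀, hp₀, hp₀v, hp₀eq⟩ := exists_rotation s f ℓ hf ⟨p₁, hp₁, hp₁v⟩
  have hR : 0 < R := by
    have h₁ : R * f p₁ + ℓ p₁ ≤ R * f v + ℓ v := hle p₁ hp₁
    nlinarith [hf p₁ hp₁ hp₁v]
  set g : E →L[ℝ] ℝ := R • f + ℓ
  obtain ⟨u, hu, huv, hseg⟩ := exists_isExposed_segment (s.filter fun x => g x = g v)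
    (Finset.mem_filter.2 ⟨hv, rfl⟩) (fun x hx => hf x (Finset.mem_filter.1 hx).1)
    ⟨p₀, Finset.mem_filter.2 ⟨hp₀, hp₀eq⟩, hp₀v⟩
  obtain ⟨hus, hgu⟩ := Finset.mem_filter.1 hu
  refine ⟨u, hus, ?_, (isExposed_convexHull_convexHull_filter s hle).trans_convexHull
    s.finite_toSet hseg⟩
  have hgu' : R * f u + ℓ u = R * f v + ℓ v := hgu
  nlinarith [hf u hus huv]

theorem isExposed_segment_right {ℓ : E →L[ℝ] ℝ} {a b : E} (hab : ℓ a < ℓ b) :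
    IsExposed ℝ (segment ℝ a b) {b} := by
  rw [← convexHull_pair]
  refine (isExposed_convexHull_singleton_iff (Set.toFinite _)).2
    ⟨Set.mem_insert_of_mem _ rfl, ℓ, ?_⟩
  rintro p (rfl | rfl) hp
  exacts [hab, absurd rfl hp]

end LocallyConvexSpace

theorem DirEdge.oRel {P : Set V} {ℓ : V →L[ℝ] ℝ} {v w : V} (h : DirEdge P ℓ v w) :
    ORel P ℓ v w := by
  obtain ⟨⟨-, hseg⟩, hlt⟩ := h
  refine ⟨segment ℝ v w, hseg, ⟨left_mem_segment ℝ v w, fun x hx => ?_⟩,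
    ⟨right_mem_segment ℝ v w, fun x hx => ?_⟩⟩
  · exact (convex_halfSpace_ge ℓ.toLinearMap.isLinear (ℓ v)).segment_subset
      (le_refl (ℓ v)) hlt.le hx
  · exact (convex_halfSpace_le ℓ.toLinearMap.isLinear (ℓ w)).segment_subset
      hlt.le (le_refl (ℓ w)) hx

theorem NonconstOnEdges.neg {P : Set V} {ℓ : V →L[ℝ] ℝ} (hℓ : NonconstOnEdges P ℓ) :
    NonconstOnEdges P (-ℓ) :=
  fun v w hvw h => hℓ v w hvw (by simpa using h)

theorem MinAt.maxAt_neg {ℓ : V →L[ℝ] ℝ} {G : Set V} {v : V} (h : MinAt ℓ G v) :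
    MaxAt (-ℓ) G v :=
  ⟨h.1, fun x hx => neg_le_neg (h.2 x hx)⟩

section Polytope

variable {s : Finset V} {ℓ : V →L[ℝ] ℝ} {G : Set V}

theorem exists_isEdge_subset {F : Set V} (hF : IsExposed ℝ (convexHull ℝ ↑s) F) {x y : V}
    (hx : x ∈ F) (hy : y ∈ F) (hxy : x ≠ y) :
    ∃ a b, IsEdge (convexHull ℝ ↑s) a b ∧ segment ℝ a b ⊆ F := by
  classical
  set t := s.filter (· ∈ F)
  have hFt : F = convexHull ℝ ↑t := by
    rw [Finset.coe_filter]
    exact hF.eq_convexHull_inter s.finite_toSet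
  have htne : t.Nonempty := by
    rw [← Finset.coe_nonempty, ← convexHull_nonempty_iff (𝕜 := ℝ), ← hFt]
    exact ⟨x, hx⟩
  obtain ⟨v, hvt, hvexp⟩ := exists_isExposed_convexHull_singleton t htne
  obtain ⟨-, f, hf⟩ := (isExposed_convexHull_singleton_iff t.finite_toSet).1 hvexp
  have hne : ∃ p ∈ t, p ≠ v := by
    by_contra! hall
    have hsub : F ⊆ {v} := hFt ▸ convexHull_min (fun p hp => hall p hp) (convex_singleton v)
    exact hxy ((hsub hx).trans (hsub hy).symm)
  obtain ⟨u, -, huv, hseg⟩ := exists_isExposed_segment t hvt hf hne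
  rw [← hFt] at hseg
  exact ⟨v, u, ⟨huv.symm, ⟨v, left_mem_segment ℝ v u⟩, hF.trans_convexHull s.finite_toSet hseg⟩,
    hseg.subset⟩

/-- The maximizers of `ℓ` on a face form a face on which `ℓ` is constant; two of them would
span a constant edge. -/
theorem MaxAt.unique (hℓ : NonconstOnEdges (convexHull ℝ ↑s) ℓ)
    (hG : IsExposed ℝ (convexHull ℝ ↑s) G) {w w' : V} (hw : MaxAt ℓ G w)
    (hw' : MaxAt ℓ G w') : w = w' := by
  by_contra hne
  have hM : IsExposed ℝ (convexHull ℝ ↑s) (ℓ.toExposed G) :=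
    hG.trans_convexHull s.finite_toSet ContinuousLinearMap.toExposed.isExposed
  obtain ⟨a, b, hab, hsub⟩ := exists_isEdge_subset hM hw hw' hne
  have ha := hsub (left_mem_segment ℝ a b)
  have hb := hsub (right_mem_segment ℝ a b)
  exact hℓ a b hab (le_antisymm (hb.2 a ha.1) (ha.2 b hb.1))

theorem MaxAt.isExposed_singleton (hℓ : NonconstOnEdges (convexHull ℝ ↑s) ℓ)
    (hG : IsExposed ℝ (convexHull ℝ ↑s) G) {w : V} (hw : MaxAt ℓ G w) :
    IsExposed ℝ G {w} := by
  have h : ℓ.toExposed G = {w} :=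
    Set.eq_singleton_iff_unique_mem.2 ⟨hw, fun x hx => MaxAt.unique hℓ hG hx hw⟩
  exact h ▸ ContinuousLinearMap.toExposed.isExposed

theorem reflTransGen_dirEdge_of_maxAt (hℓ : NonconstOnEdges (convexHull ℝ ↑s) ℓ)
    (hG : IsExposed ℝ (convexHull ℝ ↑s) G) {w : V} (hw : MaxAt ℓ G w) {v : V}
    (hv : IsExposed ℝ G {v}) : Relation.ReflTransGen (DirEdge (convexHull ℝ ↑s) ℓ) v w := by
  classical
  set t := s.filter (· ∈ G)
  have hGt : G = convexHull ℝ ↑t := by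
    rw [Finset.coe_filter]
    exact hG.eq_convexHull_inter s.finite_toSet
  induction hn : (t.filter fun p => ℓ v < ℓ p).card using Nat.strong_induction_on
    generalizing v with
  | _ n ih =>
  rw [hGt] at hv
  obtain ⟨hvt, f, hf⟩ := (isExposed_convexHull_singleton_iff t.finite_toSet).1 hv
  by_cases hup : ∃ p ∈ t, ℓ v < ℓ p
  · obtain ⟨u, hut, hvu, hseg⟩ := exists_isExposed_segment_of_lt t hvt hf ℓ hup
    have hedge : DirEdge (convexHull ℝ ↑s) ℓ v u := ⟨⟨fun h => hvu.ne (congrArg ℓ h),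
      ⟨v, left_mem_segment ℝ v u⟩, hG.trans_convexHull s.finite_toSet (hGt ▸ hseg)⟩, hvu⟩
    have hu : IsExposed ℝ G {u} :=
      hGt ▸ hseg.trans_convexHull t.finite_toSet (isExposed_segment_right hvu)
    have hlt : (t.filter fun p => ℓ u < ℓ p) ⊂ t.filter fun p => ℓ v < ℓ p :=
      (Finset.ssubset_iff_of_subset fun p hp => Finset.mem_filter.2
        ⟨(Finset.mem_filter.1 hp).1, hvu.trans (Finset.mem_filter.1 hp).2⟩).2
        ⟨u, Finset.mem_filter.2 ⟨hut, hvu⟩, fun h => lt_irrefl _ (Finset.mem_filter.1 h).2⟩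
    exact .head hedge (ih _ (hn ▸ Finset.card_lt_card hlt) hu rfl)
  · push Not at hup
    have hvmax : MaxAt ℓ G v :=
      ⟨hGt ▸ hv.subset rfl, fun x hx => ℓ.le_of_mem_convexHull hup (hGt ▸ hx)⟩
    exact hvmax.unique hℓ hG hw ▸ .refl

theorem ORel.reflTransGen_dirEdge (hℓ : NonconstOnEdges (convexHull ℝ ↑s) ℓ) {v w : V}
    (h : ORel (convexHull ℝ ↑s) ℓ v w) :
    Relation.ReflTransGen (DirEdge (convexHull ℝ ↑s) ℓ) v w := by
  obtain ⟨G, ⟨-, hG⟩, hv, hw⟩ := h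
  exact reflTransGen_dirEdge_of_maxAt hℓ hG hw (hv.maxAt_neg.isExposed_singleton hℓ.neg hG)

end Polytope

/-- The chain order `C` (reflexive transitive closure of the
directed-edge relation) equals the reflexive transitive closure of the witness
relation `O`. -/
theorem stmt9 (P : Set V) (hP : IsPolytope P) (ℓ : V →L[ℝ] ℝ)
    (hℓ : NonconstOnEdges P ℓ) :
    ∀ v w : V, Relation.ReflTransGen (DirEdge P ℓ) v w ↔
      Relation.ReflTransGen (ORel P ℓ) v w := by
  obtain ⟨s, -, rfl⟩ := hP
  exact fun v w => ⟨Relation.ReflTransGen.mono (fun _ _ => DirEdge.oRel) _ _,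
    Relation.reflTransGen_closed (fun _ _ => ORel.reflTransGen_dirEdge hℓ) _ _⟩
end

section
/- Let P be a convex polytope with ℓ nonconstant on edges, and suppose the partition O^- = {O^-(v)} is a stratification of P. Then the negative Bruhat relation B^- coincides with the chain order C; in particular B^- is a partial order on the vertices of P. -/
open Set

variable {V : Type*} [NormedAddCommGroup V] [NormedSpace ℝ V]

/-!
Every face `F` of `conv t` equals `conv (F ∩ t)` (Krein–Milman), so there are finitely many faces,
they are closed, and a face of a face is a face (perturb the exposing functional). Hence `F⁻(w)` is
the union of the faces `G` on which `ℓ` is maximal at `w`. For a vertex `v ∈ G` the simplex method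
inside `G` gives an `ℓ`-increasing edge path from `v`, and nonconstancy on edges makes `w` the only
vertex of `G` where it can stop. An improving edge at a non-optimal vertex `v` comes from pivoting:
if `g` exposes `v`, then `ℓ + λ g`, with `λ` the largest slope of `ℓ` against `g` from `v`, exposes
a face containing `v` all of whose other points go up, and any edge of that face at `v` will do.
Conversely, a directed edge `a → b` puts `a` in the closure of the relative interior of the edge,
so `a ∈ F⁻(b)`; once `b ∈ F⁻(w)`, the stratification property gives `F⁻(b) ⊆ F⁻(w)`.
-/

namespace ContinuousLinearMap

lemma le_of_mem_convexHull_s12 {l : V →L[ℝ] ℝ} {t : Set V} {c : ℝ} (h : ∀ y ∈ t, l y ≤ c) {x : V}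
    (hx : x ∈ convexHull ℝ t) : l x ≤ c :=
  convexHull_min h (convex_halfSpace_le l.toLinearMap.isLinear c) hx

lemma exists_le_of_mem_convexHull (l : V →L[ℝ] ℝ) {t : Set V} {x : V}
    (hx : x ∈ convexHull ℝ t) : ∃ y ∈ t, l x ≤ l y :=
  (l.toLinearMap.convexOn (convex_convexHull ℝ t)).exists_ge_of_mem_convexHull
    (subset_convexHull ℝ t) hx

lemma toExposed_convexHull_inter (l : V →L[ℝ] ℝ) (t : Set V) :
    l.toExposed (convexHull ℝ t) ∩ t = l.toExposed t := by
  ext x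
  refine ⟨fun ⟨⟨_, hmax⟩, hxt⟩ => ⟨hxt, fun y hy => hmax y (subset_convexHull ℝ t hy)⟩,
    fun ⟨hxt, hmax⟩ => ⟨⟨subset_convexHull ℝ t hxt, fun y hy => le_of_mem_convexHull_s12 hmax hy⟩,
      hxt⟩⟩

end ContinuousLinearMap

lemma IsExposed.eq_convexHull_inter_s12 {t F : Set V} (ht : t.Finite)
    (hF : IsExposed ℝ (convexHull ℝ t) F) : F = convexHull ℝ (F ∩ t) := by
  have hFconv : Convex ℝ F := hF.convex (convex_convexHull ℝ t)
  have hFcpt : IsCompact F := hF.isCompact (ht.isCompact_convexHull (𝕜 := ℝ))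
  have hext : F.extremePoints ℝ ⊆ F ∩ t := fun x hx =>
    ⟨hx.1, extremePoints_convexHull_subset
      ((hF.isExtreme (𝕜 := ℝ)).extremePoints_subset_extremePoints hx)⟩
  refine (convexHull_min inter_subset_left hFconv).antisymm' ?_
  calc F = closure (convexHull ℝ (F.extremePoints ℝ)) :=
        (closure_convexHull_extremePoints hFcpt hFconv).symm
    _ ⊆ closure (convexHull ℝ (F ∩ t)) := closure_mono (convexHull_mono hext)
    _ = convexHull ℝ (F ∩ t) :=
        ((ht.subset inter_subset_right).isCompact_convexHull (𝕜 := ℝ)).isClosed.closure_eq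

lemma ContinuousLinearMap.toExposed_convexHull {t : Set V} (ht : t.Finite) (l : V →L[ℝ] ℝ) :
    l.toExposed (convexHull ℝ t) = convexHull ℝ (l.toExposed t) := by
  rw [← l.toExposed_convexHull_inter t]
  exact ContinuousLinearMap.toExposed.isExposed.eq_convexHull_inter_s12 ht

lemma Set.Finite.finite_isExposed_convexHull {t : Set V} (ht : t.Finite) :
    {F | IsExposed ℝ (convexHull ℝ t) F}.Finite :=
  (ht.finite_subsets.image (convexHull ℝ)).subset fun F hF =>
    ⟨F ∩ t, inter_subset_right, (hF.eq_convexHull_inter_s12 ht).symm⟩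

lemma ContinuousLinearMap.toExposed_convexHull_eq {t G : Set V} (ht : t.Finite)
    {h : V →L[ℝ] ℝ} {c : ℝ} (hG : Convex ℝ G) (hGt : G ⊆ convexHull ℝ t) (hGne : G.Nonempty)
    (hGc : ∀ x ∈ G, h x = c) (hle : ∀ z ∈ t, h z ≤ c) (hmem : ∀ z ∈ t, c ≤ h z → z ∈ G) :
    h.toExposed (convexHull ℝ t) = G := by
  obtain ⟨p, hp⟩ := hGne
  refine Subset.antisymm ?_ fun x hx =>
    ⟨hGt hx, fun y hy => (le_of_mem_convexHull_s12 hle hy).trans (hGc x hx).ge⟩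
  rw [h.toExposed_convexHull ht]
  refine convexHull_min (fun z hz => ?_) hG
  rw [← h.toExposed_convexHull_inter] at hz
  exact hmem z hz.2 ((hGc p hp).symm.trans_le (hz.1.2 p (hGt hp)))

lemma Set.Finite.exists_pos_forall_add_mul_neg {ι : Type*} {I : Set ι} (hI : I.Finite)
    {a b : ι → ℝ} (ha : ∀ i ∈ I, a i < 0) : ∃ ε > 0, ∀ i ∈ I, a i + ε * b i < 0 := by
  have hev : ∀ i ∈ I, ∀ᶠ ε in nhdsWithin (0 : ℝ) (Ioi 0), a i + ε * b i < 0 := fun i hi =>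
    nhdsWithin_le_nhds <| (Continuous.tendsto' (by fun_prop) 0 (a i) (by simp)).eventually
      (gt_mem_nhds (ha i hi))
  obtain ⟨ε, hεI, hε⟩ :=
    (((Filter.eventually_all_finite hI).2 hev).and self_mem_nhdsWithin).exists
  exact ⟨ε, hε, hεI⟩

/-- `G` is exposed in `conv t` by `l₁ + ε • l₂`, where `l₁` exposes `F` and `l₂` exposes `G` in
`F`, for `ε > 0` small enough that the points of `t` outside `F` stay below the level of `G`. -/
lemma IsExposed.trans_convexHull_s12 {t F G : Set V} (ht : t.Finite)
    (hF : IsExposed ℝ (convexHull ℝ t) F) (hG : IsExposed ℝ F G) :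
    IsExposed ℝ (convexHull ℝ t) G := by
  intro hGne
  have hGconv := hG.convex (hF.convex (convex_convexHull ℝ t))
  have hGsub := hG.subset.trans hF.subset
  obtain ⟨l₂, rfl⟩ := hG hGne
  obtain ⟨p, hpF, hp₂⟩ := hGne
  obtain ⟨l₁, rfl⟩ := hF ⟨p, hpF⟩
  obtain ⟨hpP, hp₁⟩ := hpF
  set P := convexHull ℝ t
  have hlt : ∀ z ∈ t \ l₁.toExposed P, l₁ z - l₁ p < 0 := fun z ⟨hzt, hzF⟩ => by
    by_contra! hz
    exact hzF ⟨subset_convexHull ℝ t hzt, fun y hy => by linarith [hp₁ y hy]⟩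
  obtain ⟨ε, hε, hεt⟩ := ht.sdiff.exists_pos_forall_add_mul_neg (b := fun z => l₂ z - l₂ p) hlt
  have hval : ∀ z, (l₁ + ε • l₂) z = l₁ z + ε * l₂ z := fun z => rfl
  refine ⟨l₁ + ε • l₂, (ContinuousLinearMap.toExposed_convexHull_eq ht hGconv hGsub
    ⟨p, ⟨hpP, hp₁⟩, hp₂⟩ (c := l₁ p + ε * l₂ p) (fun x hx => ?_) (fun z hz => ?_)
    (fun z hz hcz => ?_)).symm⟩
  · have := hp₁ x hx.1.1
    have := hx.1.2 p hpP
    have := hp₂ x hx.1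
    have := hx.2 p ⟨hpP, hp₁⟩
    rw [hval]
    nlinarith
  · by_cases hzF : z ∈ l₁.toExposed P
    · have := hp₁ z hzF.1
      have := mul_le_mul_of_nonneg_left (hp₂ z hzF) hε.le
      rw [hval]; linarith
    · have := hεt z ⟨hz, hzF⟩
      rw [hval]; linarith
  · rw [hval] at hcz
    have hzF : z ∈ l₁.toExposed P := by
      by_contra hzF
      linarith [hεt z ⟨hz, hzF⟩]
    refine ⟨hzF, fun y hy => (hp₂ y hy).trans ?_⟩
    have := hp₁ z hzF.1
    nlinarith

lemma IsExposed.exists_forall_lt {A : Set V} {v : V} (h : IsExposed ℝ A {v}) :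
    ∃ g : V →L[ℝ] ℝ, ∀ y ∈ A, y ≠ v → g y < g v := by
  obtain ⟨g, hg⟩ := h (singleton_nonempty v)
  have hmem : ∀ y, y = v ↔ y ∈ A ∧ ∀ z ∈ A, g z ≤ g y := fun y => Set.ext_iff.1 hg y
  have hv := (hmem v).1 rfl
  exact ⟨g, fun y hy hyv => (hv.2 y hy).lt_of_ne fun heq =>
    hyv ((hmem y).2 ⟨hy, fun z hz => heq ▸ hv.2 z hz⟩)⟩

noncomputable def relSlope (f g : V →L[ℝ] ℝ) (v y : V) : ℝ := (f y - f v) / (g v - g y)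

/-- If `g` strictly exposes `v` in `t`, then `f + λ • g`, for `λ` the largest slope of `f`
against `g` from `v`, exposes `v` together with exactly the slope maximisers. -/
lemma exists_toExposed_relSlope_max {t : Set V} (ht : t.Finite) {v : V} (hvt : v ∈ t)
    {g : V →L[ℝ] ℝ} (hg : ∀ y ∈ t, y ≠ v → g y < g v) (f : V →L[ℝ] ℝ) {y₀ : V}
    (hy₀t : y₀ ∈ t) (hy₀v : y₀ ≠ v) :
    ∃ h : V →L[ℝ] ℝ, v ∈ h.toExposed t ∧ (∃ y ∈ h.toExposed t, y ≠ v) ∧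
      ∀ y ∈ h.toExposed t, y ≠ v → ∀ z ∈ t, z ≠ v → relSlope f g v z ≤ relSlope f g v y := by
  obtain ⟨b, ⟨hbt, hbv⟩, hbmax⟩ :=
    Set.exists_max_image (t \ {v}) (relSlope f g v) ht.sdiff ⟨y₀, hy₀t, hy₀v⟩
  set μ := relSlope f g v b
  have hkey : ∀ y ∈ t, y ≠ v →
      (f + μ • g) v - (f + μ • g) y = (g v - g y) * (μ - relSlope f g v y) := by
    intro y hyt hyv
    have hpos : g v - g y ≠ 0 := (sub_pos.2 (hg y hyt hyv)).ne'
    simp only [relSlope, add_apply, smul_apply, smul_eq_mul]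
    field_simp
    ring
  have hle : ∀ y ∈ t, (f + μ • g) y ≤ (f + μ • g) v := by
    intro y hyt
    rcases eq_or_ne y v with rfl | hyv
    · rfl
    · have := mul_nonneg (sub_pos.2 (hg y hyt hyv)).le (sub_nonneg.2 (hbmax y ⟨hyt, hyv⟩))
      linarith [hkey y hyt hyv]
  refine ⟨f + μ • g, ⟨hvt, hle⟩, ⟨b, ⟨hbt, fun z hz => ?_⟩, hbv⟩, fun y hy hyv z hz hzv => ?_⟩
  · have := hkey b hbt hbv
    rw [sub_self, mul_zero] at this
    linarith [hle z hz]
  · have h₁ := hkey y hy.1 hyv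
    have h₂ := hy.2 v hvt
    have hpos := sub_pos.2 (hg y hy.1 hyv)
    have : μ ≤ relSlope f g v y := by nlinarith
    exact (hbmax z ⟨hz, hzv⟩).trans this

lemma convexHull_eq_segment_of_smul_sub_eq {t : Set V} {v b : V} (hvt : v ∈ t) (hbt : b ∈ t)
    {g : V →L[ℝ] ℝ} (hbv : g b < g v) (hg : ∀ y ∈ t, g b ≤ g y ∧ g y ≤ g v)
    (hcol : ∀ y ∈ t, (g v - g b) • (y - v) = (g v - g y) • (b - v)) :
    convexHull ℝ t = segment ℝ v b := by
  refine (convexHull_min (fun y hy => ?_) (convex_segment v b)).antisymm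
    ((convex_convexHull ℝ t).segment_subset (subset_convexHull ℝ t hvt)
      (subset_convexHull ℝ t hbt))
  have hpos : 0 < g v - g b := sub_pos.2 hbv
  obtain ⟨hby, hyv⟩ := hg y hy
  rw [segment_eq_image']
  refine ⟨(g v - g y) / (g v - g b), ⟨div_nonneg (sub_nonneg.2 hyv) hpos.le,
    (div_le_one hpos).2 (by linarith)⟩, ?_⟩
  change v + _ • (b - v) = y
  rw [div_eq_inv_mul, mul_smul, ← hcol y hy, inv_smul_smul₀ hpos.ne', add_sub_cancel]

/-- If `t` lies on a ray from `v`, its hull is a segment; otherwise a functional separating two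
slopes against `g` pivots to a face with fewer points of `t`. -/
lemma exists_isExposed_segment_s12 {t : Set V} (ht : t.Finite) {v : V} (hvt : v ∈ t)
    {g : V →L[ℝ] ℝ} (hg : ∀ y ∈ t, y ≠ v → g y < g v) {y₀ : V} (hy₀t : y₀ ∈ t)
    (hy₀v : y₀ ≠ v) :
    ∃ w ∈ t, w ≠ v ∧ IsExposed ℝ (convexHull ℝ t) (segment ℝ v w) := by
  induction hn : t.ncard using Nat.strong_induction_on generalizing t y₀ with
  | _ n ih =>
  obtain ⟨b, ⟨hbt, hbv⟩, hbmin⟩ :=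
    Set.exists_min_image (t \ {v}) g ht.sdiff ⟨y₀, hy₀t, hy₀v⟩
  by_cases hcol : ∀ y ∈ t, (g v - g b) • (y - v) = (g v - g y) • (b - v)
  · refine ⟨b, hbt, hbv, ?_⟩
    have hgb : ∀ y ∈ t, g b ≤ g y ∧ g y ≤ g v := fun y hy => by
      rcases eq_or_ne y v with rfl | hyv
      · exact ⟨(hg b hbt hbv).le, le_rfl⟩
      · exact ⟨hbmin y ⟨hy, hyv⟩, (hg y hy hyv).le⟩
    rw [convexHull_eq_segment_of_smul_sub_eq hvt hbt (hg b hbt hbv) hgb hcol]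
  · push Not at hcol
    obtain ⟨y, hyt, hy⟩ := hcol
    have hyv : y ≠ v := by rintro rfl; simp at hy
    obtain ⟨f, hf⟩ := SeparatingDual.exists_separating_of_ne (R := ℝ) hy
    have hslope : relSlope f g v y ≠ relSlope f g v b := by
      intro heq
      rw [relSlope, relSlope, div_eq_div_iff (sub_pos.2 (hg y hyt hyv)).ne'
        (sub_pos.2 (hg b hbt hbv)).ne'] at heq
      apply hf
      simp only [map_smul, map_sub, smul_eq_mul]
      linarith
    obtain ⟨h, hvh, ⟨y', hy'h, hy'v⟩, hmax⟩ :=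
      exists_toExposed_relSlope_max ht hvt hg f hyt hyv
    have hsub : h.toExposed t ⊂ t := by
      refine ssubset_of_subset_not_subset (fun z hz => hz.1) fun hts => hslope ?_
      exact (hmax b (hts hbt) hbv y hyt hyv).antisymm (hmax y (hts hyt) hyv b hbt hbv)
    obtain ⟨w, hwh, hwv, hw⟩ := ih _ (hn ▸ Set.ncard_lt_ncard hsub ht) (ht.subset hsub.1) hvh
      (fun z hz => hg z hz.1) hy'h hy'v rfl
    rw [← h.toExposed_convexHull ht] at hw
    exact ⟨w, hwh.1, hwv, ContinuousLinearMap.toExposed.isExposed.trans_convexHull_s12 ht hw⟩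

lemma exists_isExposed_segment_of_lt_s12 {t : Set V} (ht : t.Finite) {v : V} (hvt : v ∈ t)
    {g : V →L[ℝ] ℝ} (hg : ∀ y ∈ t, y ≠ v → g y < g v) (ℓ : V →L[ℝ] ℝ) {y₀ : V}
    (hy₀t : y₀ ∈ t) (hlt : ℓ v < ℓ y₀) :
    ∃ w, ℓ v < ℓ w ∧ IsExposed ℝ (convexHull ℝ t) (segment ℝ v w) := by
  have hy₀v : y₀ ≠ v := by rintro rfl; exact lt_irrefl _ hlt
  obtain ⟨h, hvh, ⟨y, hyh, hyv⟩, hmax⟩ := exists_toExposed_relSlope_max ht hvt hg ℓ hy₀t hy₀v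
  obtain ⟨w, hwh, hwv, hw⟩ := exists_isExposed_segment_s12 (ht.subset fun z hz => hz.1) hvh
    (fun z hz => hg z hz.1) hyh hyv
  rw [← h.toExposed_convexHull ht] at hw
  refine ⟨w, ?_, ContinuousLinearMap.toExposed.isExposed.trans_convexHull_s12 ht hw⟩
  have hslope : 0 < relSlope ℓ g v w :=
    (div_pos (sub_pos.2 hlt) (sub_pos.2 (hg y₀ hy₀t hy₀v))).trans_le
      (hmax w hwh hwv y₀ hy₀t hy₀v)
  exact sub_pos.1 ((div_pos_iff_of_pos_right (sub_pos.2 (hg w hwh.1 hwv))).1 hslope)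

lemma exists_lt_of_ne {v w : V} (h : v ≠ w) : ∃ f : V →L[ℝ] ℝ, f v < f w := by
  obtain ⟨f, hf⟩ := SeparatingDual.exists_separating_of_ne (R := ℝ) h
  rcases hf.lt_or_gt with hlt | hlt
  · exact ⟨f, hlt⟩
  · exact ⟨-f, neg_lt_neg hlt⟩

lemma isExposed_segment_right_s12 {v w : V} (h : v ≠ w) : IsExposed ℝ (segment ℝ v w) {w} := by
  obtain ⟨f, hf⟩ := exists_lt_of_ne h
  refine fun _ => ⟨f, ?_⟩
  change {w} = f.toExposed (segment ℝ v w)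
  rw [← convexHull_pair, f.toExposed_convexHull (toFinite _)]
  convert (convexHull_singleton w).symm
  ext x
  simp only [ContinuousLinearMap.toExposed, mem_insert_iff, mem_singleton_iff, mem_ofPred_eq,
    forall_eq_or_imp, forall_eq]
  grind

lemma maxAt_segment {ℓ : V →L[ℝ] ℝ} {v w : V} (h : ℓ v ≤ ℓ w) : MaxAt ℓ (segment ℝ v w) w := by
  refine ⟨right_mem_segment ℝ v w, fun x hx => ?_⟩
  rw [← convexHull_pair] at hx
  exact ContinuousLinearMap.le_of_mem_convexHull_s12 (by simpa using h) hx

lemma left_mem_closure_intrinsicInterior_segment {v w : V} (h : v ≠ w) :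
    v ∈ closure (intrinsicInterior ℝ (segment ℝ v w)) := by
  have hd : 0 < ‖w - v‖ := norm_pos_iff.2 (sub_ne_zero.2 h.symm)
  have he : ‖‖w - v‖⁻¹ • (w - v)‖ = 1 := by simp [norm_smul, hd.ne']
  let φ : ℝ →ᵃⁱ[ℝ] V := (AffineIsometryEquiv.constVAdd ℝ V v).toAffineIsometry.comp
    (LinearIsometry.toSpanSingleton ℝ V he).toAffineIsometry
  have hφ : ∀ θ, φ θ = v + θ • ‖w - v‖⁻¹ • (w - v) := fun θ => rfl
  have hseg : segment ℝ v w = φ '' Icc 0 ‖w - v‖ := by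
    rw [← segment_eq_Icc hd.le, ← φ.coe_toAffineMap, image_segment]
    simp [hφ, smul_smul, hd.ne']
  have h0 : (0 : ℝ) ∈ closure (Ioo 0 ‖w - v‖) := by
    rw [closure_Ioo hd.ne]
    exact left_mem_Icc.2 hd.le
  have hv := mem_closure_image φ.continuous.continuousAt h0
  rw [hφ, zero_smul, add_zero] at hv
  rw [hseg, AffineIsometry.intrinsicInterior_image]
  exact closure_mono (image_mono ((interior_Icc (a := (0 : ℝ))).symm.subset.trans
    interior_subset_intrinsicInterior)) hv

section Polytope

variable {t : Set V} {ℓ : V →L[ℝ] ℝ}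

lemma IsVertex.mem_of_convexHull {v : V} (hv : IsVertex (convexHull ℝ t) v) : v ∈ t :=
  extremePoints_convexHull_subset
    (exposedPoints_subset_extremePoints (mem_exposedPoints_iff_exposed_singleton.2 hv.2))

lemma IsEdge.isVertex_right (ht : t.Finite) {v w : V} (h : IsEdge (convexHull ℝ t) v w) :
    IsVertex (convexHull ℝ t) w :=
  ⟨singleton_nonempty w, h.2.2.trans_convexHull_s12 ht (isExposed_segment_right_s12 h.1)⟩

lemma exists_dirEdge_of_lt (ht : t.Finite) {G : Set V} (hG : IsExposed ℝ (convexHull ℝ t) G)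
    {v x : V} (hv : IsVertex (convexHull ℝ t) v) (hvG : v ∈ G) (hxG : x ∈ G)
    (hlt : ℓ v < ℓ x) :
    ∃ w ∈ G, DirEdge (convexHull ℝ t) ℓ v w := by
  obtain ⟨g, hg⟩ := hv.2.exists_forall_lt
  have hGt := hG.eq_convexHull_inter_s12 ht
  rw [hGt] at hxG
  obtain ⟨y₀, hy₀, hxy₀⟩ := ℓ.exists_le_of_mem_convexHull hxG
  obtain ⟨w, hvw, hw⟩ := exists_isExposed_segment_of_lt_s12 (ht.subset inter_subset_right)
    ⟨hvG, hv.mem_of_convexHull⟩ (fun y hy hyv => hg y (hG.subset hy.1) hyv) ℓ hy₀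
    (hlt.trans_le hxy₀)
  rw [← hGt] at hw
  exact ⟨w, hw.subset (right_mem_segment ℝ v w), ⟨ne_of_apply_ne ℓ hvw.ne,
    ⟨⟨v, left_mem_segment ℝ v w⟩, hG.trans_convexHull_s12 ht hw⟩⟩, hvw⟩

/-- A second vertex maximising `ℓ` on `G` would lie in the face of `G` where `ℓ` is maximal,
and that face would then contain an edge on which `ℓ` is constant. -/
lemma lt_of_maxAt_of_ne (ht : t.Finite) (hℓ : NonconstOnEdges (convexHull ℝ t) ℓ) {G : Set V}
    (hG : IsExposed ℝ (convexHull ℝ t) G) {v w : V} (hv : IsVertex (convexHull ℝ t) v)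
    (hvG : v ∈ G) (hw : MaxAt ℓ G w) (hvw : v ≠ w) : ℓ v < ℓ w := by
  refine (hw.2 v hvG).lt_of_ne fun heq => ?_
  obtain ⟨g, hg⟩ := hv.2.exists_forall_lt
  have hH := hG.trans_convexHull_s12 ht (ContinuousLinearMap.toExposed.isExposed (l := ℓ))
  have hvH : v ∈ ℓ.toExposed G := ⟨hvG, fun y hy => heq ▸ hw.2 y hy⟩
  obtain ⟨u, huH, hu⟩ := exists_dirEdge_of_lt ht hH hv hvH hw (ℓ := -g)
    (neg_lt_neg (hg w (hG.subset hw.1) hvw.symm))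
  exact hℓ v u hu.1 (le_antisymm (huH.2 v hvG) (hvH.2 u huH.1))

lemma reflTransGen_dirEdge_of_mem_face (ht : t.Finite)
    (hℓ : NonconstOnEdges (convexHull ℝ t) ℓ) {G : Set V} (hG : IsExposed ℝ (convexHull ℝ t) G)
    {v w : V} (hv : IsVertex (convexHull ℝ t) v) (hvG : v ∈ G) (hw : MaxAt ℓ G w) :
    Relation.ReflTransGen (DirEdge (convexHull ℝ t) ℓ) v w := by
  induction hn : {y ∈ t | ℓ v < ℓ y}.ncard using Nat.strong_induction_on generalizing v with
  | _ n ih =>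
  rcases eq_or_ne v w with rfl | hvw
  · exact .refl
  obtain ⟨u, huG, hu⟩ := exists_dirEdge_of_lt ht hG hv hvG hw.1
    (lt_of_maxAt_of_ne ht hℓ hG hv hvG hw hvw)
  have hu' := hu.1.isVertex_right ht
  refine .head hu (ih _ ?_ hu' huG rfl)
  rw [← hn]
  refine Set.ncard_lt_ncard (ssubset_of_subset_not_subset (fun y hy => ⟨hy.1, hu.2.trans hy.2⟩)
    fun h => (h ⟨hu'.mem_of_convexHull, hu.2⟩).2.false) (ht.subset (sep_subset _ _))

lemma exists_face_of_mem_Fneg (ht : t.Finite) {v w : V} (h : v ∈ Fneg (convexHull ℝ t) ℓ w) :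
    ∃ G, IsExposed ℝ (convexHull ℝ t) G ∧ MaxAt ℓ G w ∧ v ∈ G := by
  set 𝒢 := {G | IsFace (convexHull ℝ t) G ∧ MaxAt ℓ G w}
  have hfin : 𝒢.Finite := ht.finite_isExposed_convexHull.subset fun G hG => hG.1.2
  have hsub : Fneg (convexHull ℝ t) ℓ w ⊆ ⋃ G ∈ 𝒢, G :=
    calc closure (⋃ G ∈ 𝒢, intrinsicInterior ℝ G)
        ⊆ closure (⋃ G ∈ 𝒢, G) :=
          closure_mono (biUnion_mono subset_rfl fun G _ => intrinsicInterior_subset)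
      _ = ⋃ G ∈ 𝒢, closure G := hfin.closure_biUnion _
      _ = ⋃ G ∈ 𝒢, G := iUnion₂_congr fun G hG =>
          (hG.1.2.isClosed (ht.isCompact_convexHull (𝕜 := ℝ)).isClosed).closure_eq
  obtain ⟨G, hG, hvG⟩ := mem_iUnion₂.1 (hsub h)
  exact ⟨G, hG.1.2, hG.2, hvG⟩

lemma closure_intrinsicInterior_subset_Fneg {P G : Set V} {w : V} (hG : IsFace P G)
    (hw : MaxAt ℓ G w) : closure (intrinsicInterior ℝ G) ⊆ Fneg P ℓ w :=
  closure_mono (subset_biUnion_of_mem (u := fun G => intrinsicInterior ℝ G) ⟨hG, hw⟩)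

lemma mem_Oneg_self {P : Set V} {w : V} (hw : IsVertex P w) : w ∈ Oneg P ℓ w :=
  mem_biUnion (show IsFace P {w} ∧ MaxAt ℓ {w} w from ⟨hw, rfl, fun _ hx => hx ▸ le_rfl⟩)
    (by rw [intrinsicInterior_singleton]; rfl)

lemma DirEdge.mem_Fneg {P : Set V} {v w : V} (h : DirEdge P ℓ v w) : v ∈ Fneg P ℓ w :=
  closure_intrinsicInterior_subset_Fneg h.1.2 (maxAt_segment h.2.le)
    (left_mem_closure_intrinsicInterior_segment h.1.1)

lemma StratNeg.Fneg_subset {P : Set V} (hstrat : StratNeg P ℓ) {u w : V} (hu : IsVertex P u)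
    (hw : IsVertex P w) (h : u ∈ Fneg P ℓ w) : Fneg P ℓ u ⊆ Fneg P ℓ w :=
  closure_minimal (hstrat u w hu hw ⟨u, mem_Oneg_self hu, h⟩) isClosed_closure

lemma StratNeg.mem_Fneg_of_reflTransGen (ht : t.Finite) (hstrat : StratNeg (convexHull ℝ t) ℓ)
    {v w : V} (hw : IsVertex (convexHull ℝ t) w)
    (h : Relation.ReflTransGen (DirEdge (convexHull ℝ t) ℓ) v w) :
    v ∈ Fneg (convexHull ℝ t) ℓ w := by
  induction h using Relation.ReflTransGen.head_induction_on with
  | refl => exact subset_closure (mem_Oneg_self hw)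
  | head hab _ ih => exact hstrat.Fneg_subset (hab.1.isVertex_right ht) hw ih hab.mem_Fneg

end Polytope

/-- If `O⁻` is a stratification, then the negative Bruhat relation
`B⁻ (v,w) ↔ v ∈ F⁻(w)` coincides with the chain order `C` on vertices of `P`. -/
theorem stmt12 (P : Set V) (hP : IsPolytope P) (ℓ : V →L[ℝ] ℝ)
    (hℓ : NonconstOnEdges P ℓ) (hstrat : StratNeg P ℓ) :
    ∀ v w : V, IsVertex P v → IsVertex P w →
      (v ∈ Fneg P ℓ w ↔ Relation.ReflTransGen (DirEdge P ℓ) v w) := by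
  obtain ⟨s, -, rfl⟩ := hP
  intro v w hv hw
  refine ⟨fun h => ?_, hstrat.mem_Fneg_of_reflTransGen s.finite_toSet hw⟩
  obtain ⟨G, hG, hGw, hvG⟩ := exists_face_of_mem_Fneg s.finite_toSet h
  exact reflTransGen_dirEdge_of_mem_face s.finite_toSet hℓ hG hv hvG hGw
end

section
/- Let C ⊂ ℝ^n be a pointed polyhedral cone of dimension d and ℓ a linear functional whose zero set contains no ray of C. Then there exist faces F₁, F₂ of C with ℓ ≥ 0 on F₁ and ℓ ≤ 0 on F₂ such that dim F₁ + dim F₂ ≥ d. Equivalently, for any convex polytope P with ℓ nonconstant on edges, and any vertex v of P, dim F^+(v) + dim F^-(v) ≥ dim P. -/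
open Set

variable {V : Type*} [NormedAddCommGroup V] [NormedSpace ℝ V]

/-- The dimension of `F⁻(v)`: the maximal dimension of a face of `P` with
ℓ-maximum at `v`. -/
noncomputable def dimFneg (P : Set V) (ℓ : V →L[ℝ] ℝ) (v : V) : ℕ :=
  sSup {d : ℕ | ∃ G, IsFace P G ∧ MaxAt ℓ G v ∧ dimS G = d}

/-- The dimension of `F⁺(v)`: the maximal dimension of a face of `P` with
ℓ-minimum at `v`. -/
noncomputable def dimFpos (P : Set V) (ℓ : V →L[ℝ] ℝ) (v : V) : ℕ :=
  sSup {d : ℕ | ∃ G, IsFace P G ∧ MinAt ℓ G v ∧ dimS G = d}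


/-!
At a vertex `v` of `P = convexHull s`, consider the linear system in an unknown functional `g`:
`0 ≤ g (w - v)` and `-ℓ (w - v) ≤ g (w - v)` for `w ∈ s`. Any solution exposes two faces of `P`
through `v`: `G₁ = {g = g v}`, on which `ℓ ≥ ℓ v` since `g + ℓ ≥ (g + ℓ) v` there, and
`G₂ = {g + ℓ = (g + ℓ) v}`, on which `ℓ ≤ ℓ v`. A solution exists because `v` is exposed, and the
simplex method's line search (move `g` along a functional vanishing on the tight constraints until
a new constraint becomes tight) produces a basic one, whose tight vectors `w - v` span
`vectorSpan P`. Each tight vector lies in `vectorSpan G₁` or `vectorSpan G₂`, so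
`dim P ≤ dim G₁ + dim G₂`.
-/

section BasicSolution

theorem Submodule.exists_strongDual_eq_one_of_notMem {p : Submodule ℝ V}
    (hp : IsClosed (p : Set V)) {x : V} (hx : x ∉ p) :
    ∃ f : V →L[ℝ] ℝ, f x = 1 ∧ ∀ y ∈ p, f y = 0 := by
  obtain ⟨f, u, hfp, hfx⟩ := geometric_hahn_banach_closed_point p.convex hp hx
  have hu : 0 < u := by simpa using hfp 0 p.zero_mem
  have hfp0 : ∀ y ∈ p, f y = 0 := by
    intro y hy
    by_contra hy0
    have := hfp ((u / f y) • y) (p.smul_mem _ hy)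
    rw [map_smul, smul_eq_mul, div_mul_cancel₀ _ hy0] at this
    exact this.false
  have hfx0 : f x ≠ 0 := (hu.trans hfx).ne'
  exact ⟨(f x)⁻¹ • f, inv_mul_cancel₀ hfx0, fun y hy => by simp [hfp0 y hy]⟩

variable {ι : Type*} (a : ι → V) (b : ι → ℝ)

/-- The span of the constraint vectors `a i` whose constraint `b i ≤ g (a i)` is tight at `g`. -/
def tightSpan (g : V →L[ℝ] ℝ) : Submodule ℝ V :=
  Submodule.span ℝ (a '' {i | g (a i) = b i})

variable {a b}

theorem tightSpan_le_span_range (g : V →L[ℝ] ℝ) :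
    tightSpan a b g ≤ Submodule.span ℝ (range a) :=
  Submodule.span_mono (image_subset_range _ _)

theorem exists_feasible_smul [Finite ι] {φ : V →L[ℝ] ℝ} (hφ : ∀ i, 0 ≤ φ (a i))
    (hb : ∀ i, φ (a i) = 0 → b i ≤ 0) : ∃ t : ℝ, ∀ i, b i ≤ (t • φ) (a i) := by
  obtain ⟨M, hM⟩ := (finite_range fun i => b i / φ (a i)).bddAbove
  refine ⟨max M 0, fun i => ?_⟩
  rw [smul_apply, smul_eq_mul]
  rcases (hφ i).eq_or_lt with h0 | hpos
  · rw [← h0, mul_zero]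
    exact hb i h0.symm
  · exact (div_le_iff₀ hpos).mp ((hM ⟨i, rfl⟩).trans (le_max_left _ _))

theorem exists_feasible_tightSpan_lt [Finite ι] {g : V →L[ℝ] ℝ} (hg : ∀ i, b i ≤ g (a i))
    {j : ι} (hj : a j ∉ tightSpan a b g) :
    ∃ g' : V →L[ℝ] ℝ, (∀ i, b i ≤ g' (a i)) ∧ tightSpan a b g < tightSpan a b g' := by
  have := FiniteDimensional.span_of_finite ℝ (finite_range a)
  have : FiniteDimensional ℝ (tightSpan a b g) :=
    Submodule.finiteDimensional_of_le (tightSpan_le_span_range g)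
  obtain ⟨ψ, hψj, hψ⟩ := Submodule.exists_strongDual_eq_one_of_notMem
    (Submodule.closed_of_finiteDimensional _) hj
  have hψ_tight : ∀ i, g (a i) = b i → ψ (a i) = 0 := fun i hi =>
    hψ _ (Submodule.subset_span ⟨i, hi, rfl⟩)
  -- Step back along `-ψ` to the first constraint with `ψ (a i) > 0` that becomes tight.
  let root : ι → ℝ := fun i => (b i - g (a i)) / ψ (a i)
  obtain ⟨k, hk, hk_max⟩ : ∃ k, 0 < ψ (a k) ∧ ∀ i, 0 < ψ (a i) → root i ≤ root k :=
    exists_max_image {i | 0 < ψ (a i)} root (toFinite _) ⟨j, by simp [hψj]⟩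
  have hk0 : root k ≤ 0 := div_nonpos_of_nonpos_of_nonneg (sub_nonpos.mpr (hg k)) hk.le
  have happ : ∀ x, (g + root k • ψ) x = g x + root k * ψ x := fun x => rfl
  refine ⟨g + root k • ψ, fun i => ?_, lt_of_le_of_ne ?_ fun heq => ?_⟩
  · rw [happ]
    rcases le_or_gt (ψ (a i)) 0 with hi | hi
    · nlinarith [hg i]
    · have := (div_le_iff₀ hi).mp (hk_max i hi)
      linarith
  · refine Submodule.span_mono ?_
    rintro _ ⟨i, hi, rfl⟩
    refine ⟨i, ?_, rfl⟩
    show (g + root k • ψ) (a i) = b i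
    rw [happ, hψ_tight i hi, mul_zero, add_zero]
    exact hi
  · have hk_tight : a k ∈ tightSpan a b (g + root k • ψ) := by
      refine Submodule.subset_span ⟨k, ?_, rfl⟩
      show (g + root k • ψ) (a k) = b k
      rw [happ, div_mul_cancel₀ _ hk.ne']
      ring
    rw [← heq] at hk_tight
    exact hk.ne' (hψ _ hk_tight)

theorem exists_feasible_forall_mem_tightSpan [Finite ι] {g : V →L[ℝ] ℝ}
    (hg : ∀ i, b i ≤ g (a i)) :
    ∃ g' : V →L[ℝ] ℝ, (∀ i, b i ≤ g' (a i)) ∧ ∀ i, a i ∈ tightSpan a b g' := by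
  have : FiniteDimensional ℝ (Submodule.span ℝ (range a)) :=
    FiniteDimensional.span_of_finite ℝ (finite_range a)
  let ranks : Set ℕ :=
    {n | ∃ g' : V →L[ℝ] ℝ, (∀ i, b i ≤ g' (a i)) ∧ Module.finrank ℝ (tightSpan a b g') = n}
  have hbdd : BddAbove ranks := ⟨Module.finrank ℝ (Submodule.span ℝ (range a)), by
    rintro _ ⟨g', -, rfl⟩
    exact Submodule.finrank_mono (tightSpan_le_span_range g')⟩
  obtain ⟨g₀, hg₀, hrank⟩ := Nat.sSup_mem (s := ranks) ⟨_, g, hg, rfl⟩ hbdd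
  refine ⟨g₀, hg₀, fun j => by_contra fun hj => ?_⟩
  obtain ⟨g₁, hg₁, hlt⟩ := exists_feasible_tightSpan_lt hg₀ hj
  have : FiniteDimensional ℝ (tightSpan a b g₁) :=
    Submodule.finiteDimensional_of_le (tightSpan_le_span_range g₁)
  have := le_csSup hbdd ⟨g₁, hg₁, rfl⟩
  have := Submodule.finrank_lt_finrank_of_lt hlt
  omega

end BasicSolution

section Faces

variable {P G G₁ G₂ : Set V} {ℓ φ : V →L[ℝ] ℝ} {v : V}

theorem vectorSpan_convexHull (s : Set V) : vectorSpan ℝ (convexHull ℝ s) = vectorSpan ℝ s := by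
  rw [← direction_affineSpan, affineSpan_convexHull, direction_affineSpan]

theorem le_apply_of_mem_convexHull {s : Set V} {c : ℝ} (h : ∀ w ∈ s, c ≤ φ w) {x : V}
    (hx : x ∈ convexHull ℝ s) : c ≤ φ x :=
  convexHull_min h (convex_halfSpace_ge (φ : V →ₗ[ℝ] ℝ).isLinear c) hx

theorem isFace_setOf_apply_eq (hv : v ∈ P) (hφ : ∀ x ∈ P, φ v ≤ φ x) :
    IsFace P {x ∈ P | φ x = φ v} := by
  refine ⟨⟨v, hv, rfl⟩, fun _ => ⟨-φ, ?_⟩⟩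
  ext x
  simp only [mem_ofPred_eq, neg_apply, neg_le_neg_iff, and_congr_right_iff]
  exact fun hx => ⟨fun hxv y hy => hxv ▸ hφ y hy,
    fun hmax => le_antisymm (hmax v hv) (hφ x hx)⟩

theorem minAt_setOf_apply_eq (hv : v ∈ P) (h : ∀ x ∈ P, (φ + ℓ) v ≤ (φ + ℓ) x) :
    MinAt ℓ {x ∈ P | φ x = φ v} v := by
  refine ⟨⟨hv, rfl⟩, fun x ⟨hx, hφx⟩ => ?_⟩
  have := h x hx
  simp only [add_apply, hφx] at this
  linarith

theorem maxAt_setOf_add_apply_eq (hv : v ∈ P) (h : ∀ x ∈ P, φ v ≤ φ x) :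
    MaxAt ℓ {x ∈ P | (φ + ℓ) x = (φ + ℓ) v} v := by
  refine ⟨⟨hv, rfl⟩, fun x ⟨hx, hφx⟩ => ?_⟩
  have := h x hx
  simp only [add_apply] at hφx
  linarith

theorem IsVertex.exists_forall_lt (hv : IsVertex P v) :
    ∃ φ : V →L[ℝ] ℝ, ∀ x ∈ P, x ≠ v → φ v < φ x := by
  obtain ⟨f, hf⟩ := hv.2 hv.1
  have hv_max : ∀ y ∈ P, f y ≤ f v := (hf.subset (mem_singleton v)).2
  refine ⟨-f, fun x hx hxv => ?_⟩
  simp only [neg_apply, neg_lt_neg_iff]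
  refine (hv_max x hx).lt_of_ne fun hfx => hxv ?_
  exact hf.symm.subset ⟨hx, fun y hy => hfx ▸ hv_max y hy⟩

theorem IsPolytope.exists_eq_convexHull_of_mem (hP : IsPolytope P) (hv : v ∈ P) :
    ∃ s : Finset V, v ∈ s ∧ P = convexHull ℝ (s : Set V) := by
  classical
  obtain ⟨s, -, rfl⟩ := hP
  refine ⟨insert v s, Finset.mem_insert_self v s, ?_⟩
  rw [Finset.coe_insert]
  exact (convexHull_mono (subset_insert v _)).antisymm
    (convexHull_min (insert_subset hv (subset_convexHull ℝ _)) (convex_convexHull ℝ _))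

theorem IsPolytope.finiteDimensional_vectorSpan (hP : IsPolytope P) :
    FiniteDimensional ℝ (vectorSpan ℝ P) := by
  obtain ⟨s, -, rfl⟩ := hP
  rw [vectorSpan_convexHull]
  exact finiteDimensional_vectorSpan_of_finite ℝ s.finite_toSet

theorem IsPolytope.dimS_le_of_subset (hP : IsPolytope P) (hG : G ⊆ P) : dimS G ≤ dimS P :=
  have := hP.finiteDimensional_vectorSpan
  Submodule.finrank_mono (vectorSpan_mono ℝ hG)

theorem IsPolytope.dimS_le_add (hP : IsPolytope P) (hG₁ : G₁ ⊆ P) (hG₂ : G₂ ⊆ P)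
    (hspan : vectorSpan ℝ P ≤ vectorSpan ℝ G₁ ⊔ vectorSpan ℝ G₂) :
    dimS P ≤ dimS G₁ + dimS G₂ := by
  have := hP.finiteDimensional_vectorSpan
  have : FiniteDimensional ℝ (vectorSpan ℝ G₁) :=
    Submodule.finiteDimensional_of_le (vectorSpan_mono ℝ hG₁)
  have : FiniteDimensional ℝ (vectorSpan ℝ G₂) :=
    Submodule.finiteDimensional_of_le (vectorSpan_mono ℝ hG₂)
  exact (Submodule.finrank_mono hspan).trans (Submodule.finrank_add_le_finrank_add_finrank _ _)

theorem IsPolytope.dimS_le_dimFpos (hP : IsPolytope P) (hG : IsFace P G) (hmin : MinAt ℓ G v) :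
    dimS G ≤ dimFpos P ℓ v :=
  le_csSup ⟨dimS P, by rintro _ ⟨G', hG', -, rfl⟩; exact hP.dimS_le_of_subset hG'.2.subset⟩
    ⟨G, hG, hmin, rfl⟩

theorem IsPolytope.dimS_le_dimFneg (hP : IsPolytope P) (hG : IsFace P G) (hmax : MaxAt ℓ G v) :
    dimS G ≤ dimFneg P ℓ v :=
  le_csSup ⟨dimS P, by rintro _ ⟨G', hG', -, rfl⟩; exact hP.dimS_le_of_subset hG'.2.subset⟩
    ⟨G, hG, hmax, rfl⟩

end Faces

theorem exists_isFace_minAt_isFace_maxAt_vectorSpan_le {s : Finset V} {v : V} (hv : v ∈ s)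
    {φ : V →L[ℝ] ℝ} (hφ : ∀ w ∈ s, w ≠ v → φ v < φ w) (ℓ : V →L[ℝ] ℝ) :
    ∃ G₁ G₂, IsFace (convexHull ℝ (s : Set V)) G₁ ∧ MinAt ℓ G₁ v ∧
      IsFace (convexHull ℝ (s : Set V)) G₂ ∧ MaxAt ℓ G₂ v ∧
      vectorSpan ℝ (convexHull ℝ (s : Set V)) ≤ vectorSpan ℝ G₁ ⊔ vectorSpan ℝ G₂ := by
  set P := convexHull ℝ (s : Set V)
  have hvP : v ∈ P := subset_convexHull ℝ _ hv
  have hφs : ∀ w ∈ s, 0 ≤ φ (w - v) ∧ (φ (w - v) = 0 → w = v) := by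
    intro w hw
    rcases eq_or_ne w v with rfl | hne
    · simp
    · have := hφ w hw hne
      rw [map_sub]
      exact ⟨by linarith, fun h => by linarith⟩
  -- The constraints `0 ≤ g (w - v)` and `-ℓ (w - v) ≤ g (w - v)`, for `w ∈ s`.
  let a : s ⊕ s → V := fun i => ((Sum.elim id id i : s) : V) - v
  let b : s ⊕ s → ℝ := Sum.elim 0 fun w => -ℓ (w - v)
  obtain ⟨t, ht⟩ := exists_feasible_smul (a := a) (b := b) (φ := φ)
    (by rintro (⟨w, hw⟩ | ⟨w, hw⟩) <;> exact (hφs w hw).1)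
    (by rintro (⟨w, hw⟩ | ⟨w, hw⟩) h <;> obtain rfl := (hφs w hw).2 h <;> simp [b])
  obtain ⟨g, hg, hbasic⟩ := exists_feasible_forall_mem_tightSpan ht
  have hg₁ : ∀ x ∈ P, g v ≤ g x := fun x => le_apply_of_mem_convexHull fun w hw => by
    have : 0 ≤ g (w - v) := hg (.inl ⟨w, hw⟩)
    rwa [map_sub, sub_nonneg] at this
  have hg₂ : ∀ x ∈ P, (g + ℓ) v ≤ (g + ℓ) x := fun x => le_apply_of_mem_convexHull fun w hw => by
    have : -ℓ (w - v) ≤ g (w - v) := hg (.inr ⟨w, hw⟩)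
    simp only [map_sub, add_apply] at this ⊢
    linarith
  set G₁ := {x ∈ P | g x = g v}
  set G₂ := {x ∈ P | (g + ℓ) x = (g + ℓ) v}
  have htight : tightSpan a b g ≤ vectorSpan ℝ G₁ ⊔ vectorSpan ℝ G₂ := by
    refine Submodule.span_le.mpr ?_
    rintro _ ⟨⟨w, hw⟩ | ⟨w, hw⟩, hwt, rfl⟩
    · have hwG : w ∈ G₁ := ⟨subset_convexHull ℝ _ hw, by
        simpa [a, b, map_sub, sub_eq_zero] using hwt⟩
      exact Submodule.mem_sup_left (vsub_mem_vectorSpan ℝ hwG ⟨hvP, rfl⟩)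
    · have hwG : w ∈ G₂ := ⟨subset_convexHull ℝ _ hw, by
        simp only [a, b, mem_ofPred_eq, Sum.elim_inr, id, map_sub, add_apply] at hwt ⊢
        linarith⟩
      exact Submodule.mem_sup_right (vsub_mem_vectorSpan ℝ hwG ⟨hvP, rfl⟩)
  refine ⟨G₁, G₂, isFace_setOf_apply_eq hvP hg₁, minAt_setOf_apply_eq hvP hg₂,
    isFace_setOf_apply_eq hvP hg₂, maxAt_setOf_add_apply_eq hvP hg₁, ?_⟩
  rw [vectorSpan_convexHull, vectorSpan_eq_span_vsub_set_right ℝ hv, Submodule.span_le]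
  rintro _ ⟨w, hw, rfl⟩
  exact htight (hbasic (.inl ⟨w, hw⟩))

theorem stmt13_general (P : Set V) (hP : IsPolytope P) (ℓ : V →L[ℝ] ℝ)
    (v : V) (hv : IsVertex P v) :
    dimS P ≤ dimFpos P ℓ v + dimFneg P ℓ v := by
  obtain ⟨s, hvs, rfl⟩ := hP.exists_eq_convexHull_of_mem (hv.2.subset (mem_singleton v))
  obtain ⟨φ, hφ⟩ := hv.exists_forall_lt
  obtain ⟨G₁, G₂, hG₁, hmin, hG₂, hmax, hspan⟩ :=
    exists_isFace_minAt_isFace_maxAt_vectorSpan_le hvs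
      (fun w hw => hφ w (subset_convexHull ℝ _ hw)) ℓ
  calc dimS (convexHull ℝ (s : Set V)) ≤ dimS G₁ + dimS G₂ :=
        hP.dimS_le_add hG₁.2.subset hG₂.2.subset hspan
    _ ≤ dimFpos _ ℓ v + dimFneg _ ℓ v :=
        add_le_add (hP.dimS_le_dimFpos hG₁ hmin) (hP.dimS_le_dimFneg hG₂ hmax)

/-- For any convex polytope `P` with `ℓ` nonconstant on edges and
any vertex `v`, `dim F⁺(v) + dim F⁻(v) ≥ dim P`. -/
theorem stmt13 (P : Set V) (hP : IsPolytope P) (ℓ : V →L[ℝ] ℝ)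
    (hℓ : NonconstOnEdges P ℓ) (v : V) (hv : IsVertex P v) :
    dimS P ≤ dimFpos P ℓ v + dimFneg P ℓ v :=
  stmt13_general P hP ℓ v hv
end
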